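/- arXiv:math/0005033 — 5 statements merged into one kernel-verified Lean document; each statement's English description precedes it below -/
import Mathlib

section
/- Let u, w : ℝ × ℝⁿ → ℝⁿ be continuous, and let η, ξ, ζ : ℝ × ℝⁿ → ℝⁿ be C¹ maps such that for each t the map ζ(t,·) is a two-sided inverse of ξ(t,·) (i.e., ξ(t, ζ(t,y)) = y and ζ(t, ξ(t,x)) = x for all x, y), and such that ∂_t η(t,x) = u(t, η(t,x)) and ∂_t ξ(t,x) = w(t, ξ(t,x)). Define the fuzzy flow η̃(t,x) = ζ(t, η(t,x)). Then for all (t,x) the Jacobian matrix Dξ(t, ·) evaluated at η̃(t,x) is invertible and ∂_t η̃(t,x) = [D_yξ(t, η̃(t,x))]⁻¹ · ( u(t, η(t,x)) − w(t, η(t,x)) ); that is, the Eulerian velocity of the fuzzy flow η̃ = ξ⁻¹ ∘ η is the pullback by ξ of the difference u − w of the Eulerian velocities of η and ξ. -/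
open Matrix

/-- The Jacobian matrix of a map `f : ℝⁿ → ℝⁿ` at `x`; entry `(i,j)` is `∂_j f_i (x)`. -/
noncomputable def jacobian {n : ℕ} (f : (Fin n → ℝ) → Fin n → ℝ) (x : Fin n → ℝ) :
    Matrix (Fin n) (Fin n) ℝ :=
  Matrix.of fun i j => fderiv ℝ (fun y => f y i) x (Pi.single j 1)


lemma jacobian_eq {n : ℕ} {f : (Fin n → ℝ) → Fin n → ℝ} {x : Fin n → ℝ}
    (hf : DifferentiableAt ℝ f x) :
    jacobian f x = LinearMap.toMatrix' (fderiv ℝ f x : (Fin n → ℝ) →ₗ[ℝ] (Fin n → ℝ)) := by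
  ext i j
  have h : fderiv ℝ (fun y => f y i) x
      = (ContinuousLinearMap.proj i : ((Fin n → ℝ)) →L[ℝ] ℝ).comp (fderiv ℝ f x) :=
    (((ContinuousLinearMap.proj i : ((Fin n → ℝ)) →L[ℝ] ℝ).hasFDerivAt).comp x
      hf.hasFDerivAt).fderiv
  simp only [jacobian, Matrix.of_apply, LinearMap.toMatrix'_apply, h,
    ContinuousLinearMap.coe_comp', Function.comp_apply, ContinuousLinearMap.coe_coe,
    ContinuousLinearMap.proj_apply]

lemma toMatrix'_mulVec {n : ℕ} (L : (Fin n → ℝ) →ₗ[ℝ] (Fin n → ℝ)) (v : Fin n → ℝ) :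
    LinearMap.toMatrix' L *ᵥ v = L v := by
  rw [← Matrix.toLin'_apply, Matrix.toLin'_toMatrix']

/-- **The Eulerian velocity of the fuzzy flow.**
If `∂_t η = u ∘ η`, `∂_t ξ = w ∘ ξ`, and `ζ(t,·)` is a two-sided inverse of `ξ(t,·)`,
then the fuzzy flow `η̃(t,x) = ζ(t, η(t,x))` satisfies: the Jacobian of `ξ(t,·)` at
`η̃(t,x)` is invertible, and
`∂_t η̃(t,x) = [D_yξ(t, η̃(t,x))]⁻¹ ⬝ (u(t, η(t,x)) − w(t, η(t,x)))`,
i.e. the Eulerian velocity of `η̃ = ξ⁻¹ ∘ η` is the pullback by `ξ` of `u − w`. -/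
theorem fuzzy_flow_velocity (n : ℕ)
    (u w : ℝ × (Fin n → ℝ) → Fin n → ℝ) (hu : Continuous u) (hw : Continuous w)
    (η ξ ζ : ℝ × (Fin n → ℝ) → Fin n → ℝ)
    (hη : ContDiff ℝ 1 η) (hξ : ContDiff ℝ 1 ξ) (hζ : ContDiff ℝ 1 ζ)
    (hinv₁ : ∀ t y, ξ (t, ζ (t, y)) = y)
    (hinv₂ : ∀ t x, ζ (t, ξ (t, x)) = x)
    (hηflow : ∀ t x, HasDerivAt (fun s => η (s, x)) (u (t, η (t, x))) t)
    (hξflow : ∀ t x, HasDerivAt (fun s => ξ (s, x)) (w (t, ξ (t, x))) t)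
    (ηf : ℝ × (Fin n → ℝ) → Fin n → ℝ)
    (hηf : ∀ t x, ηf (t, x) = ζ (t, η (t, x))) :
    ∀ t x,
      IsUnit (jacobian (fun z => ξ (t, z)) (ηf (t, x))) ∧
      deriv (fun s => ηf (s, x)) t =
        (jacobian (fun z => ξ (t, z)) (ηf (t, x)))⁻¹ *ᵥ
          (u (t, η (t, x)) - w (t, η (t, x))) := by
  intro t x
  have hξd : Differentiable ℝ ξ := hξ.differentiable one_ne_zero
  have hζd : Differentiable ℝ ζ := hζ.differentiable one_ne_zero
  set y : Fin n → ℝ := η (t, x) with hy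
  set p : Fin n → ℝ := ζ (t, y) with hp
  have hpf : ηf (t, x) = p := hηf t x
  have hξty : ξ (t, p) = y := hinv₁ t y
  -- spatial derivatives of the time slices
  have hξs : ∀ z : Fin n → ℝ, HasFDerivAt (fun z' => ξ (t, z'))
      ((fderiv ℝ ξ (t, z)).comp (ContinuousLinearMap.inr ℝ ℝ (Fin n → ℝ))) z :=
    fun z => (hξd (t, z)).hasFDerivAt.comp z (hasFDerivAt_prodMk_right t z)
  have hζs : ∀ z : Fin n → ℝ, HasFDerivAt (fun z' => ζ (t, z'))
      ((fderiv ℝ ζ (t, z)).comp (ContinuousLinearMap.inr ℝ ℝ (Fin n → ℝ))) z :=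
    fun z => (hζd (t, z)).hasFDerivAt.comp z (hasFDerivAt_prodMk_right t z)
  set Lξ := (fderiv ℝ ξ (t, p)).comp (ContinuousLinearMap.inr ℝ ℝ (Fin n → ℝ)) with hLξ
  set Lζ := (fderiv ℝ ζ (t, y)).comp (ContinuousLinearMap.inr ℝ ℝ (Fin n → ℝ)) with hLζ
  -- chain rule : the two slice derivatives are mutually inverse
  have hξζ : Lξ.comp Lζ = ContinuousLinearMap.id ℝ (Fin n → ℝ) := by
    have h1 : HasFDerivAt (fun z => ξ (t, ζ (t, z))) (Lξ.comp Lζ) y := by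
      have := HasFDerivAt.comp (x := y) (hp ▸ hξs (ζ (t, y))) (hζs y)
      simpa [Function.comp] using this
    simp only [hinv₁] at h1
    exact h1.unique (hasFDerivAt_id y)
  have hζξ : Lζ.comp Lξ = ContinuousLinearMap.id ℝ (Fin n → ℝ) := by
    have h1 : HasFDerivAt (fun z => ζ (t, ξ (t, z))) (Lζ.comp Lξ) p := by
      have hA : HasFDerivAt (fun z' => ζ (t, z')) Lζ (ξ (t, p)) := by
        rw [hξty]; exact hζs y
      have := HasFDerivAt.comp (x := p) hA (hξs p)
      simpa [Function.comp] using this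
    simp only [hinv₂] at h1
    exact h1.unique (hasFDerivAt_id p)
  -- time derivative of ξ at the point p : fderiv ξ (t,p) (1,0) = w (t, y)
  have hξtp : fderiv ℝ ξ (t, p) (1, 0) = w (t, y) := by
    have h1 : HasDerivAt (fun s => ξ (s, p)) (fderiv ℝ ξ (t, p) (1, 0)) t :=
      (hξd (t, p)).hasFDerivAt.comp_hasDerivAt t
        (HasDerivAt.prodMk (hasDerivAt_id t) (hasDerivAt_const t p))
    have h2 := hξflow t p
    rw [hξty] at h2
    exact h1.unique h2
  -- time derivative of ζ at (t, y)
  set cζ : Fin n → ℝ := fderiv ℝ ζ (t, y) (1, 0) with hcζ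
  have hζt : HasDerivAt (fun s => ζ (s, y)) cζ t :=
    (hζd (t, y)).hasFDerivAt.comp_hasDerivAt t
      (HasDerivAt.prodMk (hasDerivAt_id t) (hasDerivAt_const t y))
  -- differentiating ξ (s, ζ (s, y)) = y  gives  Lξ cζ = - w (t, y)
  have hLξcζ : Lξ cζ = - w (t, y) := by
    have h1 : HasDerivAt (fun s => ξ (s, ζ (s, y)))
        (fderiv ℝ ξ (t, ζ (t, y)) ((1 : ℝ), cζ)) t :=
      (hζd (t, y) |> fun _ => (hξd (t, ζ (t, y))).hasFDerivAt.comp_hasDerivAt t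
        (HasDerivAt.prodMk (hasDerivAt_id t) hζt))
    simp only [hinv₁] at h1
    have h2 := h1.unique (hasDerivAt_const t y)
    have h3 : ((1 : ℝ), cζ) = ((1 : ℝ), (0 : Fin n → ℝ)) + ((0 : ℝ), cζ) := by simp
    rw [← hp, h3, map_add] at h2
    have h4 : fderiv ℝ ξ (t, p) ((0 : ℝ), cζ) = Lξ cζ := rfl
    rw [hξtp, h4] at h2
    exact eq_neg_of_add_eq_zero_right h2
  -- derivative of the fuzzy flow
  set D : Fin n → ℝ := fderiv ℝ ζ (t, y) ((1 : ℝ), u (t, y)) with hD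
  have hder : HasDerivAt (fun s => ζ (s, η (s, x))) D t :=
    (hζd (t, y)).hasFDerivAt.comp_hasDerivAt t (HasDerivAt.prodMk (hasDerivAt_id t) (hηflow t x))
  have hDsplit : D = cζ + Lζ (u (t, y)) := by
    have h3 : ((1 : ℝ), u (t, y)) = ((1 : ℝ), (0 : Fin n → ℝ)) + ((0 : ℝ), u (t, y)) := by simp
    rw [hD, h3, map_add]
    rfl
  -- matrices
  have hJ : jacobian (fun z => ξ (t, z)) (ηf (t, x))
      = LinearMap.toMatrix' (Lξ : (Fin n → ℝ) →ₗ[ℝ] (Fin n → ℝ)) := by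
    rw [hpf, jacobian_eq (hξs p).differentiableAt, (hξs p).fderiv]
  have hJK : LinearMap.toMatrix' (Lξ : (Fin n → ℝ) →ₗ[ℝ] (Fin n → ℝ))
      * LinearMap.toMatrix' (Lζ : (Fin n → ℝ) →ₗ[ℝ] (Fin n → ℝ)) = 1 := by
    rw [← LinearMap.toMatrix'_comp, ← ContinuousLinearMap.toLinearMap_comp, hξζ]
    simp
  have hunit : IsUnit (jacobian (fun z => ξ (t, z)) (ηf (t, x))) := by
    rw [hJ]
    have := invertibleOfRightInverse _ _ hJK
    exact isUnit_of_invertible _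
  refine ⟨hunit, ?_⟩
  have hderiv : deriv (fun s => ηf (s, x)) t = D := by
    have hfun : (fun s => ηf (s, x)) = fun s => ζ (s, η (s, x)) :=
      funext fun s => hηf s x
    rw [hfun]
    exact hder.deriv
  have hinvJ : (jacobian (fun z => ξ (t, z)) (ηf (t, x)))⁻¹
      = LinearMap.toMatrix' (Lζ : (Fin n → ℝ) →ₗ[ℝ] (Fin n → ℝ)) := by
    rw [hJ]
    exact Matrix.inv_eq_right_inv hJK
  rw [hderiv, hinvJ, toMatrix'_mulVec]
  -- now show D = Lζ (u (t,y) - w (t,y))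
  have hcζ' : cζ = - Lζ (w (t, y)) := by
    have := congrArg Lζ hLξcζ
    have hid : Lζ (Lξ cζ) = cζ := by
      have := congrFun (congrArg (fun (L : (Fin n → ℝ) →L[ℝ] Fin n → ℝ) => (L : (Fin n → ℝ) → Fin n → ℝ)) hζξ) cζ
      simpa using this
    rw [hid, map_neg] at this
    exact this
  have hLζu : Lζ (u (t, y)) - Lζ (w (t, y)) = Lζ (u (t, y) - w (t, y)) := (map_sub Lζ _ _).symm
  rw [hDsplit, hcζ']
  simp only [ContinuousLinearMap.coe_coe, map_sub]
  abel
end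

section
/- Let ξ : (−1,1) × ℝ × ℝⁿ → ℝⁿ, written (ε,t,x) ↦ ξ^ε(t,x), be a C² map with ξ⁰(t,x) = x for all (t,x), and suppose the Jacobian matrix D_xξ^ε(t,x) is invertible for every (ε,t,x). Let u : ℝ × ℝⁿ → ℝⁿ be C¹. Define the infinitesimal fluctuation vector ξ'(t,x) = ∂_ε ξ^ε(t,x)|_{ε=0} and the perturbed Eulerian velocity u^ε(t,x) = [D_xξ^ε(t,x)]⁻¹ · ( u(t, ξ^ε(t,x)) − ∂_t ξ^ε(t,x) ). Then the first-order term of the Taylor expansion in ε is the Lie derivative expression: ∂_ε u^ε(t,x)|_{ε=0} = (∇u)(t,x)·ξ'(t,x) − (∇ξ')(t,x)·u(t,x) − ∂_t ξ'(t,x), i.e., it equals £_{ξ'}u − ∂_t ξ' where £_{ξ'}u = (∇u)ξ' − (∇ξ')u. -/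
open Matrix
open Topology Filter

lemma jacobian_mulVec_eq {n : ℕ} (f : (Fin n → ℝ) → Fin n → ℝ) (x v : Fin n → ℝ) :
    jacobian f x *ᵥ v = fun i => fderiv ℝ (fun y => f y i) x v := by
  funext i
  have hv : (∑ j, v j • (Pi.single j 1 : Fin n → ℝ)) = v := by
    funext k
    simp [Finset.sum_apply, Pi.single_apply]
  calc (jacobian f x *ᵥ v) i
      = ∑ j, v j • (fderiv ℝ (fun y => f y i) x) ((Pi.single j 1 : Fin n → ℝ)) := by
        simp [jacobian, Matrix.mulVec, dotProduct, mul_comm, smul_eq_mul]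
    _ = (fderiv ℝ (fun y => f y i) x) (∑ j, v j • (Pi.single j 1 : Fin n → ℝ)) := by
        rw [map_sum]; simp
    _ = _ := by rw [hv]

lemma differentiableAt_det {n : ℕ} {A : ℝ → Matrix (Fin n) (Fin n) ℝ} {e : ℝ}
    (h : ∀ i j, DifferentiableAt ℝ (fun ε => A ε i j) e) :
    DifferentiableAt ℝ (fun ε => (A ε).det) e := by
  simp_rw [Matrix.det_apply']
  apply DifferentiableAt.fun_sum
  intro σ _
  exact DifferentiableAt.const_mul (DifferentiableAt.fun_finsetProd fun i _ => h (σ i) i) _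

lemma differentiableAt_adjugate {n : ℕ} {A : ℝ → Matrix (Fin n) (Fin n) ℝ} {e : ℝ}
    (h : ∀ i j, DifferentiableAt ℝ (fun ε => A ε i j) e) (i j : Fin n) :
    DifferentiableAt ℝ (fun ε => (A ε).adjugate i j) e := by
  simp_rw [Matrix.adjugate_apply]
  apply differentiableAt_det
  intro k l
  simp_rw [Matrix.updateRow_apply]
  by_cases hk : k = j
  · simp [hk]
  · simpa [hk] using h k l


set_option maxHeartbeats 2000000 in
/-- **First-order term of the expansion of the perturbed Eulerian velocity.**
Let `ξ^ε(t,x)` be a C² family of maps on `ε ∈ (−1,1)` with `ξ⁰(t,x) = x` and invertible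
Jacobians, let `u` be C¹, let `ξ'(t,x) = ∂_ε ξ^ε(t,x)|_{ε=0}` be the infinitesimal
fluctuation vector, and let
`u^ε(t,x) = [D_xξ^ε(t,x)]⁻¹ ⬝ (u(t, ξ^ε(t,x)) − ∂_t ξ^ε(t,x))` be the perturbed
Eulerian velocity.  Then
`∂_ε u^ε(t,x)|_{ε=0} = (∇u)·ξ' − (∇ξ')·u − ∂_t ξ' = £_{ξ'}u − ∂_t ξ'`. -/
theorem perturbed_velocity_first_order (n : ℕ)
    (ξ : ℝ → ℝ → (Fin n → ℝ) → Fin n → ℝ)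
    (hξ : ContDiffOn ℝ 2 (fun p : ℝ × ℝ × (Fin n → ℝ) => ξ p.1 p.2.1 p.2.2)
      (Set.Ioo (-1 : ℝ) 1 ×ˢ Set.univ))
    (hξ0 : ∀ t x, ξ 0 t x = x)
    (hJ : ∀ ε ∈ Set.Ioo (-1 : ℝ) 1, ∀ t x, IsUnit (jacobian (ξ ε t) x))
    (u : ℝ → (Fin n → ℝ) → Fin n → ℝ)
    (hu : ContDiff ℝ 1 (fun p : ℝ × (Fin n → ℝ) => u p.1 p.2))
    (ξ' : ℝ → (Fin n → ℝ) → Fin n → ℝ)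
    (hξ' : ∀ t x, ξ' t x = deriv (fun ε => ξ ε t x) 0)
    (uε : ℝ → ℝ → (Fin n → ℝ) → Fin n → ℝ)
    (huε : ∀ ε t x, uε ε t x =
      (jacobian (ξ ε t) x)⁻¹ *ᵥ (u t (ξ ε t x) - deriv (fun s => ξ ε s x) t)) :
    ∀ t x,
      deriv (fun ε => uε ε t x) 0 =
        jacobian (u t) x *ᵥ ξ' t x - jacobian (ξ' t) x *ᵥ u t x
          - deriv (fun s => ξ' s x) t := by
  intro t x
  -- notation
  set F : ℝ × ℝ × (Fin n → ℝ) → Fin n → ℝ := fun p => ξ p.1 p.2.1 p.2.2 with hFdef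
  have h0 : (0:ℝ) ∈ Set.Ioo (-1:ℝ) 1 := by norm_num
  have hSopen : IsOpen ((Set.Ioo (-1:ℝ) 1) ×ˢ (Set.univ : Set (ℝ × (Fin n → ℝ)))) :=
    isOpen_Ioo.prod isOpen_univ
  have hFat : ∀ {ε : ℝ}, ε ∈ Set.Ioo (-1:ℝ) 1 → ∀ (s : ℝ) (y : Fin n → ℝ),
      ContDiffAt ℝ 2 F (ε, s, y) := fun hε s y =>
    hξ.contDiffAt (hSopen.mem_nhds ⟨hε, trivial⟩)
  set L : ℝ × ℝ × (Fin n → ℝ) → (ℝ × ℝ × (Fin n → ℝ)) →L[ℝ] (Fin n → ℝ) :=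
    fderiv ℝ F with hLdef
  have hFdiff : ∀ {ε : ℝ}, ε ∈ Set.Ioo (-1:ℝ) 1 → ∀ (s : ℝ) (y : Fin n → ℝ),
      HasFDerivAt F (L (ε, s, y)) (ε, s, y) := fun hε s y =>
    ((hFat hε s y).differentiableAt (by norm_num)).hasFDerivAt
  -- curves
  have curveE : ∀ (e s : ℝ) (y : Fin n → ℝ),
      HasDerivAt (fun a : ℝ => (a, s, y) : ℝ → ℝ × ℝ × (Fin n → ℝ))
        (1, 0, 0) e := fun e s y =>
    HasDerivAt.prodMk (hasDerivAt_id e) ((hasDerivAt_const e (s, y)))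
  have curveT : ∀ (ε s : ℝ) (y : Fin n → ℝ),
      HasDerivAt (fun b : ℝ => (ε, b, y) : ℝ → ℝ × ℝ × (Fin n → ℝ))
        (0, 1, 0) s := fun ε s y =>
    HasDerivAt.prodMk (hasDerivAt_const s ε) (HasDerivAt.prodMk (hasDerivAt_id s) (hasDerivAt_const s y))
  have curveX : ∀ (ε s : ℝ) (y : Fin n → ℝ),
      HasFDerivAt (fun z : Fin n → ℝ => (ε, s, z) : (Fin n → ℝ) → ℝ × ℝ × (Fin n → ℝ))
        ((0 : (Fin n → ℝ) →L[ℝ] ℝ).prod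
          ((0 : (Fin n → ℝ) →L[ℝ] ℝ).prod (ContinuousLinearMap.id ℝ (Fin n → ℝ)))) y :=
    fun ε s y =>
    HasFDerivAt.prodMk (hasFDerivAt_const ε y) (HasFDerivAt.prodMk (hasFDerivAt_const s y) (hasFDerivAt_id y))
  -- (1) ε-derivative of ξ
  have hDε : ∀ (s : ℝ) (y : Fin n → ℝ),
      HasDerivAt (fun a : ℝ => ξ a s y) (L (0, s, y) (1, 0, 0)) 0 := by
    intro s y
    exact (hFdiff h0 s y).comp_hasDerivAt 0 (curveE 0 s y)
  have hξ'eq : ∀ (s : ℝ) (y : Fin n → ℝ), ξ' s y = L (0, s, y) (1, 0, 0) := by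
    intro s y; rw [hξ' s y, (hDε s y).deriv]
  -- (3) t-derivative of ξ
  have hDt : ∀ {ε : ℝ}, ε ∈ Set.Ioo (-1:ℝ) 1 →
      HasDerivAt (fun b : ℝ => ξ ε b x) (L (ε, t, x) (0, 1, 0)) t := by
    intro ε hε
    exact (hFdiff hε t x).comp_hasDerivAt t (curveT ε t x)
  -- (4) jacobian entries
  have hJentry : ∀ {ε : ℝ}, ε ∈ Set.Ioo (-1:ℝ) 1 → ∀ (s : ℝ) (y : Fin n → ℝ) (i j : Fin n),
      jacobian (ξ ε s) y i j = L (ε, s, y) (0, 0, Pi.single j 1) i := by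
    intro ε hε s y i j
    have h1 : HasFDerivAt (fun z : Fin n → ℝ => ξ ε s z i)
        ((ContinuousLinearMap.proj i).comp ((L (ε, s, y)).comp
          ((0 : (Fin n → ℝ) →L[ℝ] ℝ).prod
            ((0 : (Fin n → ℝ) →L[ℝ] ℝ).prod (ContinuousLinearMap.id ℝ (Fin n → ℝ)))))) y :=
      (ContinuousLinearMap.proj (R := ℝ) (φ := fun _ : Fin n => ℝ)
        i).hasFDerivAt.comp y (by have := (hFdiff hε s y).comp y (curveX ε s y); exact this)
    simp only [jacobian, Matrix.of_apply, h1.fderiv]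
    simp
  -- (5) jacobian at ε = 0 is the identity
  have hJ0 : ∀ (s : ℝ) (y : Fin n → ℝ), jacobian (ξ 0 s) y = 1 := by
    intro s y
    ext i j
    have hid : HasFDerivAt (fun z : Fin n → ℝ => z i)
        (ContinuousLinearMap.proj (R := ℝ) (φ := fun _ : Fin n => ℝ) i) y :=
      (ContinuousLinearMap.proj (R := ℝ) (φ := fun _ : Fin n => ℝ) i).hasFDerivAt
    have : (fun z : Fin n → ℝ => ξ 0 s z i) = fun z : Fin n → ℝ => z i := by
      funext z; rw [hξ0]
    simp only [jacobian, Matrix.of_apply, this, hid.fderiv]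
    simp [Pi.single_apply, Matrix.one_apply, eq_comm]
  -- (6) second derivative
  have hF2 : ContDiffAt ℝ 2 F (0, t, x) := hFat h0 t x
  have hLd : DifferentiableAt ℝ L (0, t, x) := by
    have := hF2.fderiv_right (m := 1) (by norm_num)
    exact this.differentiableAt (by norm_num)
  set B : (ℝ × ℝ × (Fin n → ℝ)) →L[ℝ] (ℝ × ℝ × (Fin n → ℝ)) →L[ℝ] (Fin n → ℝ) :=
    fderiv ℝ L (0, t, x) with hBdef
  have hLB : HasFDerivAt L B (0, t, x) := hLd.hasFDerivAt
  have hsymm : ∀ v w, B v w = B w v := hF2.isSymmSndFDerivAt (by simp)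
  -- (7) derivatives of L along curves, evaluated at a fixed vector
  have hB1 : ∀ a : ℝ × ℝ × (Fin n → ℝ),
      HasDerivAt (fun e : ℝ => L (e, t, x) a) (B (1, 0, 0) a) 0 := by
    intro a
    have h1 : HasDerivAt (fun e : ℝ => L (e, t, x)) (B (1, 0, 0)) 0 :=
      hLB.comp_hasDerivAt 0 (curveE 0 t x)
    exact (ContinuousLinearMap.apply ℝ (Fin n → ℝ) a).hasFDerivAt.comp_hasDerivAt 0 h1
  have hB2 : ∀ a : ℝ × ℝ × (Fin n → ℝ),
      HasDerivAt (fun b : ℝ => L (0, b, x) a) (B (0, 1, 0) a) t := by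
    intro a
    have h1 : HasDerivAt (fun b : ℝ => L (0, b, x)) (B (0, 1, 0)) t :=
      hLB.comp_hasDerivAt t (curveT 0 t x)
    exact (ContinuousLinearMap.apply ℝ (Fin n → ℝ) a).hasFDerivAt.comp_hasDerivAt t h1
  have hB3 : ∀ (a : ℝ × ℝ × (Fin n → ℝ)) (i j : Fin n),
      fderiv ℝ (fun z : Fin n → ℝ => L (0, t, z) a i) x (Pi.single j 1)
        = B (0, 0, Pi.single j 1) a i := by
    intro a i j
    have h1 : HasFDerivAt (fun z : Fin n → ℝ => L (0, t, z)) (B.comp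
        ((0 : (Fin n → ℝ) →L[ℝ] ℝ).prod
          ((0 : (Fin n → ℝ) →L[ℝ] ℝ).prod (ContinuousLinearMap.id ℝ (Fin n → ℝ))))) x :=
      hLB.comp x (curveX 0 t x)
    have h2 : HasFDerivAt (fun z : Fin n → ℝ => L (0, t, z) a i)
        ((ContinuousLinearMap.proj (R := ℝ) (φ := fun _ : Fin n => ℝ) i).comp
          (((ContinuousLinearMap.apply ℝ (Fin n → ℝ) a).comp (B.comp
            ((0 : (Fin n → ℝ) →L[ℝ] ℝ).prod
              ((0 : (Fin n → ℝ) →L[ℝ] ℝ).prod (ContinuousLinearMap.id ℝ (Fin n → ℝ)))))))) x :=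
      (ContinuousLinearMap.proj (R := ℝ) (φ := fun _ : Fin n => ℝ) i).hasFDerivAt.comp x
        ((ContinuousLinearMap.apply ℝ (Fin n → ℝ) a).hasFDerivAt.comp x h1)
    rw [h2.fderiv]
    simp
  -- (8) the jacobian of ξ' via B
  have hJξ' : ∀ i j : Fin n, jacobian (ξ' t) x i j = B (0, 0, Pi.single j 1) (1, 0, 0) i := by
    intro i j
    have : (fun y : Fin n → ℝ => ξ' t y i) = fun y : Fin n → ℝ => L (0, t, y) (1, 0, 0) i := by
      funext y; rw [hξ'eq]
    simp only [jacobian, Matrix.of_apply, this]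
    exact hB3 (1, 0, 0) i j
  -- (9) time derivative of ξ'
  have hDtξ' : HasDerivAt (fun s : ℝ => ξ' s x) (B (0, 1, 0) (1, 0, 0)) t := by
    have : (fun s : ℝ => ξ' s x) = fun s : ℝ => L (0, s, x) (1, 0, 0) := by
      funext s; rw [hξ'eq]
    rw [this]; exact hB2 (1, 0, 0)
  -- (10) u-part
  set U : ℝ × (Fin n → ℝ) → Fin n → ℝ := fun q => u q.1 q.2 with hUdef
  have hUd : HasFDerivAt U (fderiv ℝ U (t, x)) (t, x) :=
    ((hu.differentiable (by norm_num)) (t, x)).hasFDerivAt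
  set DU := fderiv ℝ U (t, x) with hDUdef
  have hDU : ∀ v : Fin n → ℝ, jacobian (u t) x *ᵥ v = DU (0, v) := by
    intro v
    rw [jacobian_mulVec_eq]
    funext i
    have hc : HasFDerivAt (fun y : Fin n → ℝ => (t, y) : (Fin n → ℝ) → ℝ × (Fin n → ℝ))
        ((0 : (Fin n → ℝ) →L[ℝ] ℝ).prod (ContinuousLinearMap.id ℝ (Fin n → ℝ))) x :=
      HasFDerivAt.prodMk (hasFDerivAt_const t x) (hasFDerivAt_id x)
    have h2 : HasFDerivAt (fun y : Fin n → ℝ => u t y i)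
        ((ContinuousLinearMap.proj (R := ℝ) (φ := fun _ : Fin n => ℝ) i).comp (DU.comp
          ((0 : (Fin n → ℝ) →L[ℝ] ℝ).prod (ContinuousLinearMap.id ℝ (Fin n → ℝ))))) x :=
      (ContinuousLinearMap.proj (R := ℝ) (φ := fun _ : Fin n => ℝ) i).hasFDerivAt.comp x
        (hUd.comp x hc)
    rw [h2.fderiv]
    simp
  have h_u : HasDerivAt (fun e : ℝ => u t (ξ e t x)) (DU (0, ξ' t x)) 0 := by
    have hc : HasDerivAt (fun e : ℝ => (t, ξ e t x) : ℝ → ℝ × (Fin n → ℝ))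
        ((0:ℝ), L (0, t, x) (1, 0, 0)) 0 := HasDerivAt.prodMk (hasDerivAt_const 0 t) (hDε t x)
    have hU' : HasFDerivAt U DU (t, ξ 0 t x) := by rw [hξ0]; exact hUd
    have h3 := hU'.comp_hasDerivAt 0 hc
    rw [hξ'eq]
    exact h3
  -- (12) the function w
  set w : ℝ → Fin n → ℝ := fun e => u t (ξ e t x) - deriv (fun s => ξ e s x) t with hwdef
  have hIoo : Set.Ioo (-1:ℝ) 1 ∈ 𝓝 (0:ℝ) :=
    Ioo_mem_nhds (by norm_num) (by norm_num)
  have hw' : HasDerivAt w (DU (0, ξ' t x) - B (1, 0, 0) (0, 1, 0)) 0 := by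
    have h1 : HasDerivAt (fun e : ℝ => u t (ξ e t x) - L (e, t, x) (0, 1, 0))
        (DU (0, ξ' t x) - B (1, 0, 0) (0, 1, 0)) 0 := h_u.sub (hB1 (0, 1, 0))
    apply h1.congr_of_eventuallyEq
    filter_upwards [hIoo] with e he
    rw [hwdef]
    simp only
    rw [(hDt he).deriv]
  have hw0 : w 0 = u t x := by
    rw [hwdef]
    simp only
    rw [hξ0]
    have : (fun s : ℝ => ξ 0 s x) = fun _ : ℝ => x := by funext s; rw [hξ0]
    rw [this, deriv_const]
    simp
  -- (13) the function v = uε · t x and its differentiability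
  set v : ℝ → Fin n → ℝ := fun e => uε e t x with hvdef
  have hveq : ∀ e, v e = (jacobian (ξ e t) x)⁻¹ *ᵥ w e := fun e => huε e t x
  have hJ'entry : ∀ i j : Fin n, HasDerivAt (fun e : ℝ => jacobian (ξ e t) x i j)
      (jacobian (ξ' t) x i j) 0 := by
    intro i j
    have h1 : HasDerivAt (fun e : ℝ => L (e, t, x) (0, 0, Pi.single j 1) i)
        (B (1, 0, 0) (0, 0, Pi.single j 1) i) 0 :=
      (ContinuousLinearMap.proj (R := ℝ) (φ := fun _ : Fin n => ℝ)
        i).hasFDerivAt.comp_hasDerivAt 0 (hB1 (0, 0, Pi.single j 1))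
    have heq : B (1, 0, 0) (0, 0, Pi.single j 1) i = jacobian (ξ' t) x i j := by
      rw [hJξ' i j,
        congrFun (hsymm ((1:ℝ), (0:ℝ), (0 : Fin n → ℝ)) ((0:ℝ), (0:ℝ), Pi.single j 1)) i]
    have h2 : HasDerivAt (fun e : ℝ => jacobian (ξ e t) x i j)
        (B (1, 0, 0) (0, 0, Pi.single j 1) i) 0 := by
      apply h1.congr_of_eventuallyEq
      filter_upwards [hIoo] with e he
      exact hJentry he t x i j
    exact heq ▸ h2
  have hJdiffe : ∀ i j : Fin n, DifferentiableAt ℝ (fun e => jacobian (ξ e t) x i j) 0 :=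
    fun i j => (hJ'entry i j).differentiableAt
  have hwdiffi : ∀ i, DifferentiableAt ℝ (fun e => w e i) 0 :=
    fun i => differentiableAt_pi.mp hw'.differentiableAt i
  have hdet0 : (jacobian (ξ 0 t) x).det = 1 := by rw [hJ0]; simp
  have hvdiff : DifferentiableAt ℝ v 0 := by
    have hrepr : v = fun e => ((jacobian (ξ e t) x).det)⁻¹ •
        ((jacobian (ξ e t) x).adjugate *ᵥ w e) := by
      funext e
      rw [hveq e, Matrix.inv_def, Ring.inverse_eq_inv', Matrix.smul_mulVec]
    rw [hrepr]
    apply DifferentiableAt.fun_smul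
    · exact (differentiableAt_det hJdiffe).inv (by rw [hdet0]; norm_num)
    · rw [differentiableAt_pi]
      intro i
      have : (fun e => ((jacobian (ξ e t) x).adjugate *ᵥ w e) i)
          = fun e => ∑ j, (jacobian (ξ e t) x).adjugate i j * w e j := by
        funext e; simp [Matrix.mulVec, dotProduct]
      rw [this]
      exact DifferentiableAt.fun_sum fun j _ =>
        (differentiableAt_adjugate hJdiffe i j).mul (hwdiffi j)
  -- (14) the defining equation
  have heqn : ∀ᶠ e in 𝓝 (0:ℝ), jacobian (ξ e t) x *ᵥ v e = w e := by
    filter_upwards [hIoo] with e he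
    rw [hveq e, Matrix.mulVec_mulVec, Matrix.mul_nonsing_inv _
      ((Matrix.isUnit_iff_isUnit_det _).mp (hJ e he t x)), Matrix.one_mulVec]
  -- (15) differentiate the equation
  have hv' : HasDerivAt v (deriv v 0) 0 := hvdiff.hasDerivAt
  have hv'i : ∀ j : Fin n, HasDerivAt (fun e => v e j) (deriv v 0 j) 0 :=
    hasDerivAt_pi.mp hv'
  have hw'i : ∀ i : Fin n, HasDerivAt (fun e => w e i)
      ((DU (0, ξ' t x)) i - B (1, 0, 0) (0, 1, 0) i) 0 := hasDerivAt_pi.mp hw'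
  have hv0 : v 0 = u t x := by
    rw [hveq 0, hJ0, inv_one, Matrix.one_mulVec, hw0]
  have key : ∀ i : Fin n, deriv v 0 i =
      (DU (0, ξ' t x)) i - B (1, 0, 0) (0, 1, 0) i - (jacobian (ξ' t) x *ᵥ u t x) i := by
    intro i
    have hLHS : HasDerivAt (fun e => (jacobian (ξ e t) x *ᵥ v e) i)
        (∑ j, (jacobian (ξ' t) x i j * v 0 j + jacobian (ξ 0 t) x i j * deriv v 0 j)) 0 := by
      have hfun : (fun e => (jacobian (ξ e t) x *ᵥ v e) i)
          = fun e => ∑ j, jacobian (ξ e t) x i j * v e j := by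
        funext e; simp [Matrix.mulVec, dotProduct]
      rw [hfun]
      exact HasDerivAt.fun_sum fun j _ => (hJ'entry i j).mul (hv'i j)
    have hLHS' : HasDerivAt (fun e => w e i)
        (∑ j, (jacobian (ξ' t) x i j * v 0 j + jacobian (ξ 0 t) x i j * deriv v 0 j)) 0 := by
      apply hLHS.congr_of_eventuallyEq
      filter_upwards [heqn] with e he
      exact (congrFun he i).symm
    have huniq := hLHS'.unique (hw'i i)
    rw [Finset.sum_add_distrib] at huniq
    have hs1 : ∑ j, jacobian (ξ' t) x i j * v 0 j = (jacobian (ξ' t) x *ᵥ u t x) i := by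
      rw [hv0]; simp [Matrix.mulVec, dotProduct]
    have hs2 : ∑ j, jacobian (ξ 0 t) x i j * deriv v 0 j = deriv v 0 i := by
      rw [hJ0]
      simp [Matrix.one_apply, ite_mul]
    rw [hs1, hs2] at huniq
    linarith
  -- (16) conclusion
  have hgoal : deriv (fun ε => uε ε t x) 0 = deriv v 0 := rfl
  rw [hgoal]
  funext i
  rw [key i]
  have h1 : jacobian (u t) x *ᵥ ξ' t x = DU (0, ξ' t x) := hDU (ξ' t x)
  have h2 : deriv (fun s : ℝ => ξ' s x) t = B (0, 1, 0) (1, 0, 0) := hDtξ'.deriv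
  have h3 : B (1, 0, 0) (0, 1, 0) i = B (0, 1, 0) (1, 0, 0) i :=
    congrFun (hsymm ((1:ℝ), (0:ℝ), (0 : Fin n → ℝ)) ((0:ℝ), (1:ℝ), (0 : Fin n → ℝ))) i
  simp only [Pi.sub_apply, h1, h2, h3]
  ring
end

section
/- Let u : ℝ × ℝⁿ → ℝⁿ be C¹ with div_x u(t,·) = 0 for every t, let η : ℝ × ℝⁿ → ℝⁿ be a flow of u (∂_t η(t,x) = u(t, η(t,x)), η(0,x) = x), and let F : ℝ × ℝⁿ → M_n(ℝ) be C¹ satisfying the tensor advection equation ∂_t F + (u·∇)F − (∇u)F − F(∇u)ᵀ = 0. Then det F(t, η(t,x)) = det F(0, x) for all (t,x); i.e., the determinant of the contravariant spatial fluctuation tensor is conserved along particle trajectories. -/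
open Matrix

section Aux

variable {n : ℕ}

private lemma det_updateRow_eq_sum' (M : Matrix (Fin n) (Fin n) ℝ) (i : Fin n) (v : Fin n → ℝ) :
    (M.updateRow i v).det = ∑ j, v j * M.adjugate j i := by
  have key : ∀ (s : Finset (Fin n)) (w : Fin n → ℝ),
      (M.updateRow i (∑ j ∈ s, w j • (Pi.single j 1 : Fin n → ℝ))).det
        = ∑ j ∈ s, w j * (M.updateRow i (Pi.single j 1)).det := by
    intro s
    induction s using Finset.induction_on with
    | empty =>
        intro w
        have h0 := Matrix.det_updateRow_smul M i (0 : ℝ) 0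
        simp only [zero_smul, smul_zero, zero_mul] at h0
        simpa using h0
    | insert _ _ hk ih =>
        intro w
        rw [Finset.sum_insert hk, Matrix.det_updateRow_add, Matrix.det_updateRow_smul, ih,
          Finset.sum_insert hk]
  have hv : v = ∑ j, v j • (Pi.single j 1 : Fin n → ℝ) := by
    funext k
    simp [Finset.sum_apply, Pi.single_apply]
  calc (M.updateRow i v).det
      = (M.updateRow i (∑ j, v j • (Pi.single j 1 : Fin n → ℝ))).det := by rw [← hv]
    _ = ∑ j, v j * (M.updateRow i (Pi.single j 1)).det := key _ _
    _ = ∑ j, v j * M.adjugate j i := by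
        simp [Matrix.adjugate_apply]

private lemma sum_det_updateRow' (G N : Matrix (Fin n) (Fin n) ℝ) :
    ∑ i, (G.updateRow i (N i)).det = Matrix.trace (N * G.adjugate) := by
  simp only [det_updateRow_eq_sum']
  simp [Matrix.trace, Matrix.diag, Matrix.mul_apply]

private lemma trace_term' (A G : Matrix (Fin n) (Fin n) ℝ) :
    Matrix.trace ((A * G + G * Aᵀ) * G.adjugate) = 2 * Matrix.trace A * G.det := by
  rw [Matrix.add_mul, Matrix.trace_add]
  have h1 : A * G * G.adjugate = G.det • A := by
    rw [Matrix.mul_assoc, Matrix.mul_adjugate, Matrix.mul_smul, Matrix.mul_one]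
  have h2 : Matrix.trace (G * Aᵀ * G.adjugate) = Matrix.trace (G.det • Aᵀ) := by
    rw [Matrix.trace_mul_comm, ← Matrix.mul_assoc, Matrix.adjugate_mul, Matrix.smul_mul,
      Matrix.one_mul]
  rw [h1, h2, Matrix.trace_smul, Matrix.trace_smul, Matrix.trace_transpose]
  simp only [smul_eq_mul]
  ring

private lemma hasDerivAt_det' {M : ℝ → Matrix (Fin n) (Fin n) ℝ}
    (M' : Matrix (Fin n) (Fin n) ℝ) {t : ℝ}
    (h : ∀ i j, HasDerivAt (fun s => M s i j) (M' i j) t) :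
    HasDerivAt (fun s => (M s).det) (∑ i, ((M t).updateRow i (M' i)).det) t := by
  have key : ∀ σ : Equiv.Perm (Fin n),
      HasDerivAt (fun s => ∏ i, M s (σ i) i)
        (∑ i, (∏ j ∈ Finset.univ.erase i, M t (σ j) j) * M' (σ i) i) t := by
    intro σ
    have := HasDerivAt.fun_finsetProd (u := Finset.univ) (f := fun i s => M s (σ i) i)
      (f' := fun i => M' (σ i) i) (x := t) (fun i _ => h (σ i) i)
    simpa [smul_eq_mul] using this
  have main : HasDerivAt
      (fun s => ∑ σ : Equiv.Perm (Fin n), ((Equiv.Perm.sign σ : ℤ) : ℝ) * ∏ i, M s (σ i) i)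
      (∑ σ : Equiv.Perm (Fin n), ((Equiv.Perm.sign σ : ℤ) : ℝ) *
        ∑ i, (∏ j ∈ Finset.univ.erase i, M t (σ j) j) * M' (σ i) i) t :=
    HasDerivAt.fun_sum fun σ _ => (key σ).const_mul _
  have hfun : (fun s => (M s).det)
      = fun s => ∑ σ : Equiv.Perm (Fin n), ((Equiv.Perm.sign σ : ℤ) : ℝ) * ∏ i, M s (σ i) i :=
    funext fun s => Matrix.det_apply' (M s)
  have heq : ∑ i, ((M t).updateRow i (M' i)).det
      = ∑ σ : Equiv.Perm (Fin n), ((Equiv.Perm.sign σ : ℤ) : ℝ) *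
        ∑ i, (∏ j ∈ Finset.univ.erase i, M t (σ j) j) * M' (σ i) i := by
    simp only [Matrix.det_apply']
    rw [Finset.sum_comm]
    refine Finset.sum_congr rfl fun σ _ => ?_
    rw [← Finset.mul_sum]
    congr 1
    rw [← Equiv.sum_comp σ (fun i => ∏ j, ((M t).updateRow i (M' i)) (σ j) j)]
    refine Finset.sum_congr rfl fun k _ => ?_
    rw [← Finset.mul_prod_erase Finset.univ _ (Finset.mem_univ k)]
    rw [Matrix.updateRow_self, mul_comm]
    congr 1
    refine Finset.prod_congr rfl fun j hj => ?_
    have hjk : j ≠ k := (Finset.mem_erase.1 hj).1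
    rw [Matrix.updateRow_ne (fun hc => hjk (σ.injective hc))]
  rw [hfun, heq]
  exact main

end Aux

/-- **The determinant of the advected fluctuation tensor is conserved along
particle trajectories.**  Let `u` be C¹ with `div u = 0`, let `η` be a flow of `u`,
and let `F` be a C¹ matrix field satisfying the contravariant 2-tensor advection
equation `∂_t F + (u·∇)F − (∇u)F − F(∇u)ᵀ = 0`.  Then
`det F(t, η(t,x)) = det F(0, x)` for all `(t,x)`. -/
theorem det_fluctuation_tensor_conserved (n : ℕ)
    (u : ℝ → (Fin n → ℝ) → Fin n → ℝ)
    (hu : ContDiff ℝ 1 (fun p : ℝ × (Fin n → ℝ) => u p.1 p.2))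
    (hdiv : ∀ t x, ∑ i, fderiv ℝ (fun y => u t y i) x (Pi.single i 1) = 0)
    (η : ℝ → (Fin n → ℝ) → Fin n → ℝ)
    (hηflow : ∀ t x, HasDerivAt (fun s => η s x) (u t (η t x)) t)
    (hη0 : ∀ x, η 0 x = x)
    (F : ℝ → (Fin n → ℝ) → Matrix (Fin n) (Fin n) ℝ)
    (hFsmooth : ∀ i j, ContDiff ℝ 1 (fun p : ℝ × (Fin n → ℝ) => F p.1 p.2 i j))
    (hadv : ∀ t x i j,
      deriv (fun s => F s x i j) t
        + (∑ k, u t x k * fderiv ℝ (fun y => F t y i j) x (Pi.single k 1))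
        - (jacobian (u t) x * F t x) i j
        - (F t x * (jacobian (u t) x)ᵀ) i j = 0) :
    ∀ t x, (F t (η t x)).det = (F 0 x).det := by
  intro t x
  -- the key: zero derivative of `s ↦ det F(s, η(s,x))` at every time
  have key : ∀ s : ℝ, HasDerivAt (fun r => (F r (η r x)).det) 0 s := by
    intro s
    set y : Fin n → ℝ := η s x with hy
    set A : Matrix (Fin n) (Fin n) ℝ := jacobian (u s) y with hA
    set G : Matrix (Fin n) (Fin n) ℝ := F s y with hG
    have hentry : ∀ i j,
        HasDerivAt (fun r => F r (η r x) i j) ((A * G + G * Aᵀ) i j) s := by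
      intro i j
      have hφd : DifferentiableAt ℝ (fun p : ℝ × (Fin n → ℝ) => F p.1 p.2 i j) (s, y) :=
        ((hFsmooth i j).differentiable one_ne_zero).differentiableAt
      set L := fderiv ℝ (fun p : ℝ × (Fin n → ℝ) => F p.1 p.2 i j) (s, y) with hL
      have hφ : HasFDerivAt (fun p : ℝ × (Fin n → ℝ) => F p.1 p.2 i j) L (s, y) :=
        hφd.hasFDerivAt
      have hγ : HasDerivAt (fun r => ((r, η r x) : ℝ × (Fin n → ℝ))) (1, u s y) s :=
        HasDerivAt.prodMk (hasDerivAt_id s) (hηflow s x)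
      have hcomp : HasDerivAt (fun r => F r (η r x) i j) (L (1, u s y)) s :=
        by exact hφ.comp_hasDerivAt s hγ
      -- identify the time partial derivative
      have ht : HasDerivAt (fun r => F r y i j) (L ((1 : ℝ), (0 : Fin n → ℝ))) s := by
        have h1 : HasDerivAt (fun r => ((r, y) : ℝ × (Fin n → ℝ)))
            ((1 : ℝ), (0 : Fin n → ℝ)) s :=
          HasDerivAt.prodMk (hasDerivAt_id s) (hasDerivAt_const s y)
        exact hφ.comp_hasDerivAt s h1
      have htd : deriv (fun r => F r y i j) s = L ((1 : ℝ), (0 : Fin n → ℝ)) := ht.deriv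
      -- identify the spatial partial derivatives
      have hx : HasFDerivAt (fun z => F s z i j)
          (L.comp (ContinuousLinearMap.inr ℝ ℝ (Fin n → ℝ))) y :=
        hφ.comp y (hasFDerivAt_prodMk_right s y)
      have hxd : fderiv ℝ (fun z => F s z i j) y
          = L.comp (ContinuousLinearMap.inr ℝ ℝ (Fin n → ℝ)) := hx.fderiv
      -- decompose the directional derivative
      have hsplit : L (1, u s y)
          = L ((1 : ℝ), (0 : Fin n → ℝ)) + ∑ k, u s y k *
              fderiv ℝ (fun z => F s z i j) y (Pi.single k 1) := by
        have hvec : ((1 : ℝ), u s y)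
            = ((1 : ℝ), (0 : Fin n → ℝ)) + ((0 : ℝ), u s y) := by simp
        have husum : (u s y) = ∑ k, u s y k • (Pi.single k 1 : Fin n → ℝ) := by
          funext m
          simp [Finset.sum_apply, Pi.single_apply]
        rw [hvec, map_add]
        congr 1
        rw [show ((0 : ℝ), u s y) = ContinuousLinearMap.inr ℝ ℝ (Fin n → ℝ) (u s y) from rfl,
          ← ContinuousLinearMap.comp_apply]
        conv_lhs => rw [husum]
        rw [map_sum]
        simp only [ContinuousLinearMap.map_smul, hxd, smul_eq_mul]
      -- use the advection equation
      have hadv' := hadv s y i j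
      have hval : L (1, u s y) = (A * G + G * Aᵀ) i j := by
        rw [hsplit, Matrix.add_apply]
        rw [← htd]
        rw [hA, hG, hy]
        linarith [hadv']
      rw [← hval]
      exact hcomp
    have hdet := hasDerivAt_det' (A * G + G * Aᵀ) hentry
    have hzero : ∑ i, ((F s (η s x)).updateRow i ((A * G + G * Aᵀ) i)).det = 0 := by
      have hGG : F s (η s x) = G := rfl
      rw [hGG, sum_det_updateRow', trace_term']
      have htr : Matrix.trace A = 0 := by
        have := hdiv s y
        simp only [hA, Matrix.trace, Matrix.diag, jacobian, Matrix.of_apply]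
        exact this
      rw [htr]
      ring
    rw [hzero] at hdet
    exact hdet
  have hdiff : Differentiable ℝ (fun r => (F r (η r x)).det) :=
    fun s => (key s).differentiableAt
  have hconst := is_const_of_deriv_eq_zero hdiff (fun s => (key s).deriv) t 0
  rw [hη0 x] at hconst
  exact hconst
end

section
/- (Transport of circulation.) Let u : ℝ × ℝⁿ → ℝⁿ be C¹, let η : ℝ × ℝⁿ → ℝⁿ be a C² flow of u (∂_t η(t,x) = u(t, η(t,x)), η(0,x) = x), let v : ℝ × ℝⁿ → ℝⁿ be C¹, let γ : ℝ → ℝⁿ be a C¹ loop with γ(s+1) = γ(s), and set γ_t(s) = η(t, γ(s)). Then the circulation I(t) = ∫₀¹ ⟨ v(t, γ_t(s)), ∂_s γ_t(s) ⟩ ds is differentiable and I'(t) = ∫₀¹ ⟨ (∂_t v + (u·∇)v + (∇u)ᵀ v)(t, γ_t(s)), ∂_s γ_t(s) ⟩ ds. In particular, if ∂_t v + (u·∇)v + (∇u)ᵀ v = −∇q for some C¹ function q : ℝ × ℝⁿ → ℝ, then I(t) is constant in t. -/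
open Matrix intervalIntegral

section aux
variable {E F : Type*} [NormedAddCommGroup E] [NormedSpace ℝ E]
  [NormedAddCommGroup F] [NormedSpace ℝ F]

lemma auxLeft {G : ℝ × E → F} {t : ℝ} {x : E} (hG : DifferentiableAt ℝ G (t, x)) :
    HasDerivAt (fun τ => G (τ, x)) (fderiv ℝ G (t, x) (1, 0)) t := by
  have h := hG.hasFDerivAt.comp_hasDerivAt t ((hasDerivAt_id t).prodMk (hasDerivAt_const t x))
  simpa [Function.comp_def] using h

lemma auxRight {G : ℝ × E → F} {t : ℝ} {x : E} (hG : DifferentiableAt ℝ G (t, x)) :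
    HasFDerivAt (fun y => G (t, y))
      ((fderiv ℝ G (t, x)).comp ((0 : E →L[ℝ] ℝ).prod (ContinuousLinearMap.id ℝ E))) x :=
  hG.hasFDerivAt.comp x ((hasFDerivAt_const t x).prodMk (hasFDerivAt_id x))

lemma auxRight_fderiv {G : ℝ × E → F} {t : ℝ} {x : E} (hG : DifferentiableAt ℝ G (t, x))
    (w : E) : fderiv ℝ (fun y => G (t, y)) x w = fderiv ℝ G (t, x) (0, w) := by
  rw [(auxRight hG).fderiv]; simp

end aux

lemma single_expand {n : ℕ} (w : Fin n → ℝ) : ∑ j, w j • (Pi.single j 1 : Fin n → ℝ) = w := by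
  funext k
  simp [Finset.sum_apply, Pi.single_apply]

lemma clm_expand {n : ℕ} {F : Type*} [NormedAddCommGroup F] [NormedSpace ℝ F]
    (L : (Fin n → ℝ) →L[ℝ] F) (w : Fin n → ℝ) :
    L w = ∑ j, w j • L (Pi.single j 1) := by
  conv_lhs => rw [← single_expand w]
  rw [map_sum]
  simp

lemma clm_expand2 {n : ℕ} {F : Type*} [NormedAddCommGroup F] [NormedSpace ℝ F]
    (L : (ℝ × (Fin n → ℝ)) →L[ℝ] F) (w : Fin n → ℝ) :
    L (0, w) = ∑ j, w j • L (0, (Pi.single j 1 : Fin n → ℝ)) := by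
  have h := clm_expand (L.comp (ContinuousLinearMap.inr ℝ ℝ (Fin n → ℝ))) w
  simpa using h


/-- **Transport of circulation.**  Let `u` be C¹ with C² flow `η`, `v` C¹, and
`γ` a C¹ loop; set `γ_t(s) = η(t, γ(s))`.  Then the circulation
`I(t) = ∫₀¹ ⟨v(t, γ_t(s)), ∂_s γ_t(s)⟩ ds` is differentiable with
`I'(t) = ∫₀¹ ⟨(∂_t v + (u·∇)v + (∇u)ᵀ v)(t, γ_t(s)), ∂_s γ_t(s)⟩ ds`;
in particular, if `∂_t v + (u·∇)v + (∇u)ᵀ v = −∇q` for some C¹ `q`, then `I` is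
constant. -/
theorem circulation_transport (n : ℕ)
    (u : ℝ → (Fin n → ℝ) → Fin n → ℝ)
    (hu : ContDiff ℝ 1 (fun p : ℝ × (Fin n → ℝ) => u p.1 p.2))
    (η : ℝ → (Fin n → ℝ) → Fin n → ℝ)
    (hη : ContDiff ℝ 2 (fun p : ℝ × (Fin n → ℝ) => η p.1 p.2))
    (hηflow : ∀ t x, HasDerivAt (fun s => η s x) (u t (η t x)) t)
    (hη0 : ∀ x, η 0 x = x)
    (v : ℝ → (Fin n → ℝ) → Fin n → ℝ)
    (hv : ContDiff ℝ 1 (fun p : ℝ × (Fin n → ℝ) => v p.1 p.2))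
    (γ : ℝ → Fin n → ℝ) (hγ : ContDiff ℝ 1 γ) (hloop : ∀ s, γ (s + 1) = γ s)
    (Dv : ℝ → (Fin n → ℝ) → Fin n → ℝ)
    (hDv : ∀ t x, Dv t x =
      deriv (fun τ => v τ x) t + jacobian (v t) x *ᵥ u t x
        + (jacobian (u t) x)ᵀ *ᵥ v t x)
    (I : ℝ → ℝ)
    (hI : ∀ t, I t = ∫ s in (0:ℝ)..1,
      ∑ i, v t (η t (γ s)) i * deriv (fun r => η t (γ r)) s i) :
    (∀ t, HasDerivAt I
      (∫ s in (0:ℝ)..1,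
        ∑ i, Dv t (η t (γ s)) i * deriv (fun r => η t (γ r)) s i) t) ∧
    ((∃ q : ℝ → (Fin n → ℝ) → ℝ,
        ContDiff ℝ 1 (fun p : ℝ × (Fin n → ℝ) => q p.1 p.2) ∧
        ∀ t x i, Dv t x i = - fderiv ℝ (fun y => q t y) x (Pi.single i 1)) →
      ∀ t₁ t₂, I t₁ = I t₂) := by
  classical
  set ηp := fun p : ℝ × (Fin n → ℝ) => η p.1 p.2 with hηpdef
  set Up := fun p : ℝ × (Fin n → ℝ) => u p.1 p.2 with hUpdef
  set Vp := fun p : ℝ × (Fin n → ℝ) => v p.1 p.2 with hVpdef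
  have hγd : Differentiable ℝ γ := hγ.differentiable one_ne_zero
  have hηd : Differentiable ℝ ηp := hη.differentiable (by norm_num)
  have hUd : Differentiable ℝ Up := hu.differentiable one_ne_zero
  have hVd : Differentiable ℝ Vp := hv.differentiable one_ne_zero
  set W := fun (t s : ℝ) => fderiv ℝ ηp (t, γ s) (0, deriv γ s) with hWdef
  -- the s-derivative of the transported curve
  have hW : ∀ t s, HasDerivAt (fun r => η t (γ r)) (W t s) s := by
    intro t s
    have hc : HasDerivAt (fun r => ((t, γ r) : ℝ × (Fin n → ℝ))) ((0 : ℝ), deriv γ s) s :=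
      (hasDerivAt_const s t).prodMk (hγd s).hasDerivAt
    exact (hηd (t, γ s)).hasFDerivAt.comp_hasDerivAt s hc
  have hWderiv : ∀ t s, deriv (fun r => η t (γ r)) s = W t s := fun t s => (hW t s).deriv
  -- the t-derivative of v along the flow
  have h3 : ∀ t s, HasDerivAt (fun τ => v τ (η τ (γ s)))
      (fderiv ℝ Vp (t, η t (γ s)) (1, u t (η t (γ s)))) t := by
    intro t s
    have hc : HasDerivAt (fun τ => ((τ, η τ (γ s)) : ℝ × (Fin n → ℝ)))
        ((1 : ℝ), u t (η t (γ s))) t := (hasDerivAt_id t).prodMk (hηflow t (γ s))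
    exact (hVd _).hasFDerivAt.comp_hasDerivAt t hc
  -- Schwarz: the t-derivative of W
  have hA : ContDiff ℝ 1 (fderiv ℝ ηp) := hη.fderiv_right (by norm_num)
  have h2 : ∀ t s, HasDerivAt (fun τ => W τ s)
      (fderiv ℝ Up (t, η t (γ s)) (0, W t s)) t := by
    intro t s
    have hAd : HasDerivAt (fun τ => fderiv ℝ ηp (τ, γ s))
        (fderiv ℝ (fderiv ℝ ηp) (t, γ s) (1, 0)) t :=
      auxLeft ((hA.differentiable one_ne_zero) _)
    have hc : HasDerivAt (fun τ => W τ s)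
        (fderiv ℝ (fderiv ℝ ηp) (t, γ s) (1, 0) (0, deriv γ s)) t := by
      have h := ((ContinuousLinearMap.apply ℝ (Fin n → ℝ)
        (((0 : ℝ), deriv γ s) : ℝ × (Fin n → ℝ))).hasFDerivAt).comp_hasDerivAt t hAd
      simpa [hWdef, Function.comp_def] using h
    have hsymm : fderiv ℝ (fderiv ℝ ηp) (t, γ s) (1, 0) (0, deriv γ s)
        = fderiv ℝ (fderiv ℝ ηp) (t, γ s) (0, deriv γ s) (1, 0) :=
      (hη.contDiffAt.isSymmSndFDerivAt (by simp)) _ _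
    -- the map p ↦ ∂ₜ ηp p equals p ↦ u p.1 (ηp p)
    have hfun : (fun p : ℝ × (Fin n → ℝ) => fderiv ℝ ηp p (1, 0))
        = (fun p : ℝ × (Fin n → ℝ) => u p.1 (ηp p)) := by
      funext p
      have ha : HasDerivAt (fun τ => ηp (τ, p.2)) (fderiv ℝ ηp (p.1, p.2) (1, 0)) p.1 :=
        auxLeft (hηd _)
      have hb : HasDerivAt (fun τ => η τ p.2) (u p.1 (η p.1 p.2)) p.1 := hηflow p.1 p.2
      have := ha.unique hb
      simpa using this
    have hstep2 : fderiv ℝ (fun p : ℝ × (Fin n → ℝ) => fderiv ℝ ηp p (1, 0)) (t, γ s)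
          (0, deriv γ s)
        = fderiv ℝ (fderiv ℝ ηp) (t, γ s) (0, deriv γ s) (1, 0) := by
      have h := ((ContinuousLinearMap.apply ℝ (Fin n → ℝ)
          (((1 : ℝ), (0 : Fin n → ℝ)) : ℝ × (Fin n → ℝ))).hasFDerivAt.comp
        ((t, γ s) : ℝ × (Fin n → ℝ)) ((hA.differentiable one_ne_zero) _).hasFDerivAt)
      have h' : HasFDerivAt (fun p : ℝ × (Fin n → ℝ) => fderiv ℝ ηp p (1, 0))
          (((ContinuousLinearMap.apply ℝ (Fin n → ℝ)
            (((1 : ℝ), (0 : Fin n → ℝ)) : ℝ × (Fin n → ℝ)))).comp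
            (fderiv ℝ (fderiv ℝ ηp) (t, γ s))) (t, γ s) := h
      rw [h'.fderiv]; rfl
    have hstep4 : fderiv ℝ (fun p : ℝ × (Fin n → ℝ) => u p.1 (ηp p)) (t, γ s)
          (0, deriv γ s)
        = fderiv ℝ Up (t, η t (γ s)) (0, W t s) := by
      have hg : HasFDerivAt (fun p : ℝ × (Fin n → ℝ) => ((p.1, ηp p) : ℝ × (Fin n → ℝ)))
          ((ContinuousLinearMap.fst ℝ ℝ (Fin n → ℝ)).prod (fderiv ℝ ηp (t, γ s))) (t, γ s) :=
        (ContinuousLinearMap.fst ℝ ℝ (Fin n → ℝ)).hasFDerivAt.prodMk (hηd _).hasFDerivAt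
      have h := ((hUd ((t : ℝ), ηp (t, γ s))).hasFDerivAt.comp ((t, γ s) : ℝ × (Fin n → ℝ)) hg)
      have h' : HasFDerivAt (fun p : ℝ × (Fin n → ℝ) => u p.1 (ηp p))
          ((fderiv ℝ Up ((t : ℝ), ηp (t, γ s))).comp
            ((ContinuousLinearMap.fst ℝ ℝ (Fin n → ℝ)).prod (fderiv ℝ ηp (t, γ s)))) (t, γ s) := h
      rw [h'.fderiv]
      simp [hWdef]; rfl
    rw [hsymm, ← hstep2, hfun, hstep4] at hc
    exact hc
  -- component partial derivative identities
  have hpartV : ∀ (t : ℝ) (x : Fin n → ℝ) (w : Fin n → ℝ) (i : Fin n),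
      fderiv ℝ (fun y => v t y i) x w = fderiv ℝ Vp (t, x) (0, w) i := by
    intro t x w i
    have hDr := auxRight (G := Vp) (t := t) (x := x) (hVd _)
    have h := (ContinuousLinearMap.proj (R := ℝ) (φ := fun _ : Fin n => ℝ) i).hasFDerivAt.comp x hDr
    have h' : HasFDerivAt (fun y => v t y i)
        ((ContinuousLinearMap.proj i).comp ((fderiv ℝ Vp (t, x)).comp
          ((0 : (Fin n → ℝ) →L[ℝ] ℝ).prod (ContinuousLinearMap.id ℝ (Fin n → ℝ))))) x := h
    rw [h'.fderiv]; simp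
  have hpartU : ∀ (t : ℝ) (x : Fin n → ℝ) (w : Fin n → ℝ) (i : Fin n),
      fderiv ℝ (fun y => u t y i) x w = fderiv ℝ Up (t, x) (0, w) i := by
    intro t x w i
    have hDr := auxRight (G := Up) (t := t) (x := x) (hUd _)
    have h := (ContinuousLinearMap.proj (R := ℝ) (φ := fun _ : Fin n => ℝ) i).hasFDerivAt.comp x hDr
    have h' : HasFDerivAt (fun y => u t y i)
        ((ContinuousLinearMap.proj i).comp ((fderiv ℝ Up (t, x)).comp
          ((0 : (Fin n → ℝ) →L[ℝ] ℝ).prod (ContinuousLinearMap.id ℝ (Fin n → ℝ))))) x := h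
    rw [h'.fderiv]; simp
  -- jacobian-vector products as Fréchet derivatives
  have hjacv : ∀ (t : ℝ) (x w' : Fin n → ℝ) (i : Fin n),
      (jacobian (v t) x *ᵥ w') i = fderiv ℝ Vp (t, x) (0, w') i := by
    intro t x w' i
    have h1 : (jacobian (v t) x *ᵥ w') i
        = ∑ j, w' j * (fderiv ℝ Vp (t, x) (0, Pi.single j 1)) i := by
      simp [jacobian, Matrix.mulVec, dotProduct, hpartV, mul_comm]
    rw [h1, clm_expand2 (fderiv ℝ Vp (t, x)) w']
    simp [Finset.sum_apply]
  have hjacu : ∀ (t : ℝ) (x w' : Fin n → ℝ) (i : Fin n),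
      (jacobian (u t) x *ᵥ w') i = fderiv ℝ Up (t, x) (0, w') i := by
    intro t x w' i
    have h1 : (jacobian (u t) x *ᵥ w') i
        = ∑ j, w' j * (fderiv ℝ Up (t, x) (0, Pi.single j 1)) i := by
      simp [jacobian, Matrix.mulVec, dotProduct, hpartU, mul_comm]
    rw [h1, clm_expand2 (fderiv ℝ Up (t, x)) w']
    simp [Finset.sum_apply]
  -- the key algebraic identity
  have key : ∀ (t : ℝ) (x w : Fin n → ℝ),
      (∑ i, Dv t x i * w i)
        = ∑ i, ((fderiv ℝ Vp (t, x) (1, u t x)) i * w i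
            + v t x i * (fderiv ℝ Up (t, x) (0, w)) i) := by
    intro t x w
    have hder : deriv (fun τ => v τ x) t = fderiv ℝ Vp (t, x) ((1 : ℝ), (0 : Fin n → ℝ)) :=
      (auxLeft (hVd (t, x))).deriv
    have htr : ∑ i, ((jacobian (u t) x)ᵀ *ᵥ v t x) i * w i
        = ∑ i, v t x i * ((jacobian (u t) x) *ᵥ w) i := by
      simp only [Matrix.mulVec, dotProduct, Matrix.transpose_apply, Finset.sum_mul,
        Finset.mul_sum]
      rw [Finset.sum_comm]
      apply Finset.sum_congr rfl; intro i _
      apply Finset.sum_congr rfl; intro j _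
      ring
    have hsplit : fderiv ℝ Vp (t, x) ((1 : ℝ), u t x)
        = fderiv ℝ Vp (t, x) ((1 : ℝ), (0 : Fin n → ℝ)) + fderiv ℝ Vp (t, x) (0, u t x) := by
      rw [← map_add]
      norm_num
    calc ∑ i, Dv t x i * w i
        = ∑ i, ((deriv (fun τ => v τ x) t) i * w i + (jacobian (v t) x *ᵥ u t x) i * w i
            + ((jacobian (u t) x)ᵀ *ᵥ v t x) i * w i) := by
          apply Finset.sum_congr rfl; intro i _
          rw [hDv]
          simp [add_mul]
      _ = ∑ i, ((fderiv ℝ Vp (t, x) (1, u t x)) i * w i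
            + v t x i * (fderiv ℝ Up (t, x) (0, w)) i) := by
          simp only [Finset.sum_add_distrib, htr]
          apply congrArg₂ (· + ·)
          · rw [← Finset.sum_add_distrib]
            apply Finset.sum_congr rfl; intro i _
            rw [hder, hjacv, hsplit]
            simp [add_mul]
          · apply Finset.sum_congr rfl; intro i _
            rw [hjacu]
  -- the integrand and its t-derivative
  set Fl := fun (t s : ℝ) => ∑ i, v t (η t (γ s)) i * W t s i with hFldef
  set F' := fun (t s : ℝ) => ∑ i, Dv t (η t (γ s)) i * W t s i with hF'def
  have h4 : ∀ t s, HasDerivAt (fun τ => Fl τ s) (F' t s) t := by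
    intro t s
    have hsum : HasDerivAt (fun τ => ∑ i, v τ (η τ (γ s)) i * W τ s i)
        (∑ i, ((fderiv ℝ Vp (t, η t (γ s)) (1, u t (η t (γ s)))) i * W t s i
          + v t (η t (γ s)) i * (fderiv ℝ Up (t, η t (γ s)) (0, W t s)) i)) t := by
      apply HasDerivAt.fun_sum
      intro i _
      have h3i : HasDerivAt (fun τ => v τ (η τ (γ s)) i)
          ((fderiv ℝ Vp (t, η t (γ s)) (1, u t (η t (γ s)))) i) t :=
        (ContinuousLinearMap.proj (R := ℝ) (φ := fun _ : Fin n => ℝ)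
          i).hasFDerivAt.comp_hasDerivAt t (h3 t s)
      have h2i : HasDerivAt (fun τ => W τ s i)
          ((fderiv ℝ Up (t, η t (γ s)) (0, W t s)) i) t :=
        (ContinuousLinearMap.proj (R := ℝ) (φ := fun _ : Fin n => ℝ)
          i).hasFDerivAt.comp_hasDerivAt t (h2 t s)
      exact h3i.mul h2i
    have heq : F' t s = ∑ i, ((fderiv ℝ Vp (t, η t (γ s)) (1, u t (η t (γ s)))) i * W t s i
          + v t (η t (γ s)) i * (fderiv ℝ Up (t, η t (γ s)) (0, W t s)) i) :=
      key t (η t (γ s)) (W t s)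
    rw [heq]
    exact hsum
  -- continuity facts
  have hHcont : Continuous (fun z : ℝ × ℝ => ((z.1, η z.1 (γ z.2)) : ℝ × (Fin n → ℝ))) :=
    continuous_fst.prodMk
      (hη.continuous.comp (continuous_fst.prodMk (hγ.continuous.comp continuous_snd)))
  have hWcont : Continuous (fun z : ℝ × ℝ => W z.1 z.2) := by
    have h1 : Continuous (fun z : ℝ × ℝ => fderiv ℝ ηp (z.1, γ z.2)) :=
      (hη.continuous_fderiv (by norm_num)).comp
        (continuous_fst.prodMk (hγ.continuous.comp continuous_snd))
    have h2 : Continuous (fun z : ℝ × ℝ => (((0 : ℝ), deriv γ z.2) : ℝ × (Fin n → ℝ))) :=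
      continuous_const.prodMk ((hγ.continuous_deriv le_rfl).comp continuous_snd)
    exact h1.clm_apply h2
  have hFlcont : Continuous (fun z : ℝ × ℝ => Fl z.1 z.2) := by
    apply continuous_finset_sum
    intro i _
    exact ((continuous_apply i).comp (hv.continuous.comp hHcont)).mul
      ((continuous_apply i).comp hWcont)
  have hF'cont : Continuous (fun z : ℝ × ℝ => F' z.1 z.2) := by
    have hrw : (fun z : ℝ × ℝ => F' z.1 z.2) = fun z : ℝ × ℝ =>
        ∑ i, ((fderiv ℝ Vp (z.1, η z.1 (γ z.2)) (1, u z.1 (η z.1 (γ z.2)))) i * W z.1 z.2 i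
          + v z.1 (η z.1 (γ z.2)) i * (fderiv ℝ Up (z.1, η z.1 (γ z.2)) (0, W z.1 z.2)) i) := by
      funext z; exact key z.1 (η z.1 (γ z.2)) (W z.1 z.2)
    rw [hrw]
    apply continuous_finset_sum
    intro i _
    have hAc : Continuous (fun z : ℝ × ℝ =>
        fderiv ℝ Vp (z.1, η z.1 (γ z.2)) (1, u z.1 (η z.1 (γ z.2)))) :=
      ((hv.continuous_fderiv one_ne_zero).comp hHcont).clm_apply
        (continuous_const.prodMk (hu.continuous.comp hHcont))
    have hBc : Continuous (fun z : ℝ × ℝ =>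
        fderiv ℝ Up (z.1, η z.1 (γ z.2)) (0, W z.1 z.2)) :=
      ((hu.continuous_fderiv one_ne_zero).comp hHcont).clm_apply
        (continuous_const.prodMk hWcont)
    exact (((continuous_apply i).comp hAc).mul ((continuous_apply i).comp hWcont)).add
      (((continuous_apply i).comp (hv.continuous.comp hHcont)).mul
        ((continuous_apply i).comp hBc))
  -- differentiation under the integral sign
  have main : ∀ t₀ : ℝ, HasDerivAt (fun t => ∫ s in (0:ℝ)..1, Fl t s)
      (∫ s in (0:ℝ)..1, F' t₀ s) t₀ := by
    intro t₀
    obtain ⟨C, hC⟩ := ((isCompact_closedBall t₀ 1).prod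
      (isCompact_uIcc (a := (0:ℝ)) (b := 1))).exists_bound_of_continuousOn
      hF'cont.continuousOn
    refine (hasDerivAt_integral_of_dominated_loc_of_deriv_le
      (μ := MeasureTheory.volume) (F := Fl) (F' := F') (a := 0) (b := 1)
      (bound := fun _ => C) (x₀ := t₀) (s := Metric.ball t₀ 1) (Metric.ball_mem_nhds t₀ one_pos) ?_ ?_ ?_ ?_ ?_ ?_).2
    · exact Filter.Eventually.of_forall fun t =>
        ((hFlcont.comp (Continuous.prodMk_right t)).aestronglyMeasurable)
    · exact ((hFlcont.comp (Continuous.prodMk_right t₀))).intervalIntegrable 0 1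
    · exact ((hF'cont.comp (Continuous.prodMk_right t₀))).aestronglyMeasurable
    · refine Filter.Eventually.of_forall fun s hs t ht => ?_
      exact hC (t, s) ⟨Metric.ball_subset_closedBall ht, Set.uIoc_subset_uIcc hs⟩
    · exact intervalIntegrable_const
    · exact Filter.Eventually.of_forall fun s _ t _ => h4 t s
  have hIrw : I = fun t => ∫ s in (0:ℝ)..1, Fl t s := by
    funext t
    rw [hI t]
    apply intervalIntegral.integral_congr
    intro s _
    simp only [hWderiv]; rfl
  have hF'rw : ∀ t, (∫ s in (0:ℝ)..1,
      ∑ i, Dv t (η t (γ s)) i * deriv (fun r => η t (γ r)) s i)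
      = ∫ s in (0:ℝ)..1, F' t s := by
    intro t
    apply intervalIntegral.integral_congr
    intro s _
    simp only [hWderiv]; rfl
  have hfirst2 : ∀ t, HasDerivAt I (∫ s in (0:ℝ)..1, F' t s) t := by
    intro t; rw [hIrw]; exact main t
  have hfirst : ∀ t, HasDerivAt I (∫ s in (0:ℝ)..1,
      ∑ i, Dv t (η t (γ s)) i * deriv (fun r => η t (γ r)) s i) t := by
    intro t; rw [hF'rw]; exact hfirst2 t
  refine ⟨hfirst, ?_⟩
  rintro ⟨q, hq, hgrad⟩ t₁ t₂
  have hzero : ∀ t, (∫ s in (0:ℝ)..1, F' t s) = 0 := by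
    intro t
    have hq1 : ContDiff ℝ 1 (fun y => q t y) :=
      hq.comp ((contDiff_const (c := t)).prodMk contDiff_id)
    have hqder : ∀ s, HasDerivAt (fun r => q t (η t (γ r)))
        (fderiv ℝ (fun y => q t y) (η t (γ s)) (W t s)) s := fun s =>
      ((hq1.differentiable one_ne_zero _).hasFDerivAt).comp_hasDerivAt s (hW t s)
    have hcont : Continuous (fun s => fderiv ℝ (fun y => q t y) (η t (γ s)) (W t s)) := by
      have hHtcont : Continuous (fun s : ℝ => η t (γ s)) :=
        hη.continuous.comp (continuous_const.prodMk hγ.continuous)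
      exact ((hq1.continuous_fderiv one_ne_zero).comp hHtcont).clm_apply
        (hWcont.comp (Continuous.prodMk_right t))
    have hint : ∀ s, F' t s = -(fderiv ℝ (fun y => q t y) (η t (γ s)) (W t s)) := by
      intro s
      have hexp := clm_expand (fderiv ℝ (fun y => q t y) (η t (γ s))) (W t s)
      calc F' t s
          = ∑ i, (-(fderiv ℝ (fun y => q t y) (η t (γ s)) (Pi.single i 1))) * W t s i := by
            apply Finset.sum_congr rfl; intro i _; rw [hgrad]
        _ = -(∑ i, W t s i • fderiv ℝ (fun y => q t y) (η t (γ s)) (Pi.single i 1)) := by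
            rw [← Finset.sum_neg_distrib]
            apply Finset.sum_congr rfl; intro i _
            simp [smul_eq_mul]; ring
        _ = -(fderiv ℝ (fun y => q t y) (η t (γ s)) (W t s)) := by rw [← hexp]
    have hFTC := intervalIntegral.integral_eq_sub_of_hasDerivAt
        (f := fun r => q t (η t (γ r)))
        (f' := fun s => fderiv ℝ (fun y => q t y) (η t (γ s)) (W t s))
        (fun s _ => hqder s) (hcont.intervalIntegrable 0 1)
    have hend : η t (γ 1) = η t (γ 0) := by
      rw [show (1:ℝ) = 0 + 1 by ring, hloop]
    calc (∫ s in (0:ℝ)..1, F' t s)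
        = ∫ s in (0:ℝ)..1, -(fderiv ℝ (fun y => q t y) (η t (γ s)) (W t s)) := by
          apply intervalIntegral.integral_congr; intro s _; rw [hint]
      _ = -(q t (η t (γ 1)) - q t (η t (γ 0))) := by
          rw [intervalIntegral.integral_neg, hFTC]
      _ = 0 := by rw [hend]; ring
  exact is_const_of_deriv_eq_zero (fun t => (hfirst2 t).differentiableAt)
    (fun t => by rw [(hfirst2 t).deriv, hzero]) t₁ t₂
end

section
/- (Circulation theorem for the anisotropic averaged Euler equations.) Let α > 0, and let u : ℝ × ℝⁿ → ℝⁿ, F : ℝ × ℝⁿ → M_n(ℝ) (with F(t,x) symmetric), and p : ℝ × ℝⁿ → ℝ be C³ with div u = 0, satisfying, in Euclidean coordinates (summation over repeated indices), the anisotropic averaged Euler equations: ∂_t( u_i − α² ∂_l(C^{ijkl} ∂_j u_k) ) + u_m ∂_m( u_i − α² ∂_l(C^{ijkl} ∂_j u_k) ) − α² (∂_i u_m) ∂_l(C^{mjkl} ∂_j u_k) + 2α² F_{kj} ∂_i( (D²)_{kj} ) − 4α² ∂_k( F_{kj} (D²)_{ij} ) = −∂_i p, together with the advection equation ∂_t F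 + (u·∇)F − (∇u)F − F(∇u)ᵀ = 0, where C^{ijkl} = ¼( F_{lj} δ_{ik} + F_{kj} δ_{il} + F_{li} δ_{jk} + F_{ki} δ_{jl} ), D = Def u, and (D²)_{ij} = Σ_m D_{im} D_{mj}. Set v_i = u_i − α² ∂_l(C^{ijkl} ∂_j u_k). Then for every C¹ loop γ : ℝ → ℝⁿ with γ(s+1) = γ(s), with γ_t(s) = η(t, γ(s)) where η is a C² flow of u, the circulation of v satisfies d/dt ∫₀¹ ⟨ v(t, γ_t(s)), ∂_s γ_t(s) ⟩ ds = ∫₀¹ ⟨ G(t, γ_t(s)), ∂_s γ_t(s) ⟩ ds, where G_i = 4α² ∂_k( F_{kj} (D²)_{ij} ) − 2α² F_{kj} ∂_i( (D²)_{kj} ). -/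
open Matrix intervalIntegral

/-- The partial derivative `∂_j f (x)` of a scalar field on `ℝⁿ`. -/
noncomputable def pd {n : ℕ} (f : (Fin n → ℝ) → ℝ) (j : Fin n) (x : Fin n → ℝ) : ℝ :=
  fderiv ℝ f x (Pi.single j 1)

section helpers

variable {n : ℕ} {G : Type*} [NormedAddCommGroup G] [NormedSpace ℝ G]

lemma clm_apply_eq_sum (L : (Fin n → ℝ) →L[ℝ] G) (w : Fin n → ℝ) :
    L w = ∑ m, w m • L (Pi.single m 1) := by
  have hw : w = ∑ m, w m • (Pi.single m (1:ℝ) : Fin n → ℝ) := by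
    ext j
    simp [Finset.sum_apply, Pi.single_apply, eq_comm]
  conv_lhs => rw [hw]
  rw [map_sum]
  simp

lemma hasDerivAt_comp_curve {f : ℝ × (Fin n → ℝ) → G} {t : ℝ}
    {c : ℝ → Fin n → ℝ} {w : Fin n → ℝ}
    (hf : DifferentiableAt ℝ f (t, c t)) (hc : HasDerivAt c w t) :
    HasDerivAt (fun τ => f (τ, c τ)) (fderiv ℝ f (t, c t) (1, w)) t := by
  have hcur : HasDerivAt (fun τ => ((τ, c τ) : ℝ × (Fin n → ℝ))) (1, w) t :=
    HasDerivAt.prodMk (hasDerivAt_id t) hc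
  exact hf.hasFDerivAt.comp_hasDerivAt t hcur

lemma deriv_partial_fst {f : ℝ × (Fin n → ℝ) → G} {t : ℝ} {x : Fin n → ℝ}
    (hf : DifferentiableAt ℝ f (t, x)) :
    HasDerivAt (fun s => f (s, x)) (fderiv ℝ f (t, x) (1, 0)) t :=
  hf.hasFDerivAt.comp_hasDerivAt t (HasDerivAt.prodMk (hasDerivAt_id t) (hasDerivAt_const t x))

lemma hasFDerivAt_partial_snd {f : ℝ × (Fin n → ℝ) → G} {t : ℝ} {x : Fin n → ℝ}
    (hf : DifferentiableAt ℝ f (t, x)) :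
    HasFDerivAt (fun y => f (t, y))
      ((fderiv ℝ f (t, x)).comp (ContinuousLinearMap.inr ℝ ℝ (Fin n → ℝ))) x :=
  hf.hasFDerivAt.comp x (HasFDerivAt.prodMk (hasFDerivAt_const t x) (hasFDerivAt_id x))

lemma fderiv_partial_snd_apply {f : ℝ × (Fin n → ℝ) → G} {t : ℝ} {x : Fin n → ℝ}
    (hf : DifferentiableAt ℝ f (t, x)) (w : Fin n → ℝ) :
    fderiv ℝ (fun y => f (t, y)) x w = fderiv ℝ f (t, x) (0, w) := by
  rw [(hasFDerivAt_partial_snd hf).fderiv]; rfl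

lemma pd_of_joint {f : ℝ × (Fin n → ℝ) → ℝ} {t : ℝ} {x : Fin n → ℝ}
    (hf : DifferentiableAt ℝ f (t, x)) (m : Fin n) :
    pd (fun y => f (t, y)) m x = fderiv ℝ f (t, x) (0, Pi.single m 1) :=
  fderiv_partial_snd_apply hf _

lemma fderiv_one_w {f : ℝ × (Fin n → ℝ) → ℝ} {t : ℝ} {x : Fin n → ℝ}
    (hf : DifferentiableAt ℝ f (t, x)) (w : Fin n → ℝ) :
    fderiv ℝ f (t, x) (1, w)
      = deriv (fun s => f (s, x)) t + ∑ m, w m * pd (fun y => f (t, y)) m x := by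
  have h1 : ((1 : ℝ), w) = ((1 : ℝ), (0 : Fin n → ℝ)) + ((0 : ℝ), w) := by simp
  rw [h1, map_add, (deriv_partial_fst hf).deriv]
  congr 1
  have h2 : ((0 : ℝ), w) = (ContinuousLinearMap.inr ℝ ℝ (Fin n → ℝ)) w := rfl
  rw [h2, ← ContinuousLinearMap.comp_apply,
    clm_apply_eq_sum ((fderiv ℝ f (t, x)).comp (ContinuousLinearMap.inr ℝ ℝ (Fin n → ℝ))) w]
  refine Finset.sum_congr rfl fun m _ => ?_
  rw [pd_of_joint hf m]
  rfl

lemma contDiff_pd {k m : WithTop ℕ∞} {f : ℝ × (Fin n → ℝ) → ℝ} (hf : ContDiff ℝ m f)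
    (hkm : k + 1 ≤ m) (j : Fin n) :
    ContDiff ℝ k (fun q : ℝ × (Fin n → ℝ) => pd (fun y => f (q.1, y)) j q.2) := by
  have hdf : Differentiable ℝ f := (hf.of_le (le_trans le_add_self hkm)).differentiable one_ne_zero
  have h1 : (fun q : ℝ × (Fin n → ℝ) => pd (fun y => f (q.1, y)) j q.2)
      = fun q => fderiv ℝ f q ((0 : ℝ), Pi.single j 1) := by
    funext q
    have h2 := (hasFDerivAt_partial_snd (t := q.1) (x := q.2) (hdf _)).fderiv
    show fderiv ℝ (fun y => f (q.1, y)) q.2 (Pi.single j 1) = _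
    rw [h2]
    rfl
  rw [h1]
  exact (hf.fderiv_right hkm).clm_apply contDiff_const

lemma mixed_partial {f : ℝ × (Fin n → ℝ) → Fin n → ℝ} (hf : ContDiff ℝ 2 f)
    (t : ℝ) (x w : Fin n → ℝ) :
    HasDerivAt (fun τ => fderiv ℝ (fun y => f (τ, y)) x w)
      (fderiv ℝ (fun y => fderiv ℝ f (t, y) ((1:ℝ), 0)) x w) t := by
  have hdf : Differentiable ℝ f := hf.differentiable two_ne_zero
  have hcd : ContDiff ℝ 1 (fderiv ℝ f) := hf.fderiv_right (by norm_num)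
  have hf' : Differentiable ℝ (fderiv ℝ f) := hcd.differentiable one_ne_zero
  set f'' := fderiv ℝ (fderiv ℝ f) (t, x) with hf''def
  have key1 : (fun τ => fderiv ℝ (fun y => f (τ, y)) x w)
      = fun τ => fderiv ℝ f (τ, x) ((0 : ℝ), w) := by
    funext τ
    rw [(hasFDerivAt_partial_snd (hdf _)).fderiv]
    rfl
  have step : HasDerivAt (fun τ => fderiv ℝ f (τ, x)) (f'' (1, 0)) t :=
    deriv_partial_fst (hf' (t, x))
  have step2 : HasDerivAt (fun τ => fderiv ℝ f (τ, x) ((0 : ℝ), w))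
      (f'' (1, 0) ((0 : ℝ), w)) t :=
    (ContinuousLinearMap.apply ℝ (Fin n → ℝ) ((0 : ℝ), w)).hasFDerivAt.comp_hasDerivAt t step
  have hsymm : f'' (1, 0) ((0 : ℝ), w) = f'' ((0 : ℝ), w) (1, 0) :=
    second_derivative_symmetric (fun y => (hdf y).hasFDerivAt) (hf' (t, x)).hasFDerivAt _ _
  have key2 : fderiv ℝ (fun y => fderiv ℝ f (t, y) ((1:ℝ), 0)) x w
      = f'' ((0 : ℝ), w) (1, 0) := by
    have hg := hasFDerivAt_partial_snd (f := fderiv ℝ f) (hf' (t, x))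
    have hcomp : HasFDerivAt (fun y => fderiv ℝ f (t, y) ((1:ℝ), (0 : Fin n → ℝ)))
        (((ContinuousLinearMap.apply ℝ (Fin n → ℝ) ((1 : ℝ), (0 : Fin n → ℝ)))).comp
          ((fderiv ℝ (fderiv ℝ f) (t, x)).comp (ContinuousLinearMap.inr ℝ ℝ (Fin n → ℝ)))) x :=
      (ContinuousLinearMap.apply ℝ (Fin n → ℝ)
        ((1 : ℝ), (0 : Fin n → ℝ))).hasFDerivAt.comp x hg
    rw [hcomp.fderiv]
    rfl
  rw [key2, ← hsymm, key1]
  exact step2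

end helpers
lemma circulation_algebra {n : ℕ} (P S GG U V T d : Fin n → ℝ) (α : ℝ)
    (hST : ∑ i, S i * d i = ∑ i, V i * T i) :
    (∑ i, ((-P i + α ^ 2 * S i + GG i) * d i + (U i - α ^ 2 * V i) * T i))
      - ((∑ m, U m * T m) - ∑ i, d i * P i) = ∑ i, GG i * d i := by
  have expand : ∀ i : Fin n, (-P i + α ^ 2 * S i + GG i) * d i + (U i - α ^ 2 * V i) * T i
      = GG i * d i + (α ^ 2 * (S i * d i) - α ^ 2 * (V i * T i)) + U i * T i - d i * P i := by
    intro i; ring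
  have h0 : ∑ i, (α ^ 2 * (S i * d i) - α ^ 2 * (V i * T i)) = 0 := by
    rw [Finset.sum_sub_distrib, ← Finset.mul_sum, ← Finset.mul_sum, hST, sub_self]
  rw [Finset.sum_congr rfl fun i _ => expand i, Finset.sum_sub_distrib,
    Finset.sum_add_distrib, Finset.sum_add_distrib, h0]
  ring

/-- **Circulation theorem for the anisotropic averaged Euler equations.**
Let `(u, F, p)` be a C³ solution (with `F` symmetric and `div u = 0`) of the
anisotropic averaged Euler equations
`∂_t v_i + u_m ∂_m v_i − α² (∂_i u_m) 𝒞u_m + 2α² F_{kj} ∂_i((D²)_{kj})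
  − 4α² ∂_k(F_{kj}(D²)_{ij}) = −∂_i p`,
where `v_i = u_i − α² ∂_l(C^{ijkl} ∂_j u_k)`, `𝒞u_m = ∂_l(C^{mjkl} ∂_j u_k)`,
`C^{ijkl} = ¼(F_{lj}δ_{ik} + F_{kj}δ_{il} + F_{li}δ_{jk} + F_{ki}δ_{jl})`,
`D = Def u`, together with the advection equation
`∂_t F + (u·∇)F − (∇u)F − F(∇u)ᵀ = 0`.  Then along any C¹ loop `γ` transported by a
C² flow `η` of `u`, the circulation of `v` satisfies
`d/dt ∫₀¹ ⟨v, ∂_s γ_t⟩ ds = ∫₀¹ ⟨G, ∂_s γ_t⟩ ds` with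
`G_i = 4α² ∂_k(F_{kj}(D²)_{ij}) − 2α² F_{kj} ∂_i((D²)_{kj})`. -/
theorem anisotropic_averaged_euler_circulation (n : ℕ) (α : ℝ) (hα : 0 < α)
    (u : ℝ → (Fin n → ℝ) → Fin n → ℝ)
    (F : ℝ → (Fin n → ℝ) → Matrix (Fin n) (Fin n) ℝ)
    (p : ℝ → (Fin n → ℝ) → ℝ)
    (hu : ContDiff ℝ 3 (fun q : ℝ × (Fin n → ℝ) => u q.1 q.2))
    (hF : ∀ i j, ContDiff ℝ 3 (fun q : ℝ × (Fin n → ℝ) => F q.1 q.2 i j))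
    (hp : ContDiff ℝ 3 (fun q : ℝ × (Fin n → ℝ) => p q.1 q.2))
    (hFsym : ∀ t x, (F t x)ᵀ = F t x)
    (hdiv : ∀ t x, ∑ i, pd (fun y => u t y i) i x = 0)
    -- the fourth-rank tensor `C^{ijkl} = ¼(F_{lj}δ_{ik} + F_{kj}δ_{il} + F_{li}δ_{jk} + F_{ki}δ_{jl})`
    (C : ℝ → (Fin n → ℝ) → Fin n → Fin n → Fin n → Fin n → ℝ)
    (hC : ∀ t x i j k l, C t x i j k l =
      (1 / 4 : ℝ) * (F t x l j * (if i = k then 1 else 0)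
        + F t x k j * (if i = l then 1 else 0)
        + F t x l i * (if j = k then 1 else 0)
        + F t x k i * (if j = l then 1 else 0)))
    -- the rate-of-deformation tensor `D = Def u = ½(∇u + (∇u)ᵀ)`
    (D : ℝ → (Fin n → ℝ) → Matrix (Fin n) (Fin n) ℝ)
    (hD : ∀ t x, D t x = (1 / 2 : ℝ) • (jacobian (u t) x + (jacobian (u t) x)ᵀ))
    -- the operator `(𝒞u)_m = ∂_l(C^{mjkl} ∂_j u_k)` (summation over `j, k, l`)
    (Cu : ℝ → (Fin n → ℝ) → Fin n → ℝ)
    (hCu : ∀ t x m, Cu t x m =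
      ∑ l, pd (fun y => ∑ j, ∑ k, C t y m j k l * pd (fun z => u t z k) j y) l x)
    -- the momentum `v_i = u_i − α² ∂_l(C^{ijkl} ∂_j u_k)`
    (v : ℝ → (Fin n → ℝ) → Fin n → ℝ)
    (hv : ∀ t x i, v t x i = u t x i - α ^ 2 * Cu t x i)
    -- the anisotropic averaged Euler equations
    (heqn : ∀ t x i,
      deriv (fun s => v s x i) t
        + (∑ m, u t x m * pd (fun y => v t y i) m x)
        - α ^ 2 * (∑ m, pd (fun y => u t y m) i x * Cu t x m)
        + 2 * α ^ 2 * (∑ k, ∑ j, F t x k j * pd (fun y => (D t y * D t y) k j) i x)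
        - 4 * α ^ 2 * (∑ k, pd (fun y => ∑ j, F t y k j * (D t y * D t y) i j) k x)
        = - pd (fun y => p t y) i x)
    -- the advection equation `∂_t F + (u·∇)F − (∇u)F − F(∇u)ᵀ = 0`
    (hadv : ∀ t x i j,
      deriv (fun s => F s x i j) t
        + (∑ k, u t x k * pd (fun y => F t y i j) k x)
        - (jacobian (u t) x * F t x) i j
        - (F t x * (jacobian (u t) x)ᵀ) i j = 0)
    -- a C² flow of `u`
    (η : ℝ → (Fin n → ℝ) → Fin n → ℝ)
    (hη : ContDiff ℝ 2 (fun q : ℝ × (Fin n → ℝ) => η q.1 q.2))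
    (hηflow : ∀ t x, HasDerivAt (fun s => η s x) (u t (η t x)) t)
    (hη0 : ∀ x, η 0 x = x)
    -- a C¹ loop
    (γ : ℝ → Fin n → ℝ) (hγ : ContDiff ℝ 1 γ) (hloop : ∀ s, γ (s + 1) = γ s)
    -- `G_i = 4α² ∂_k(F_{kj}(D²)_{ij}) − 2α² F_{kj} ∂_i((D²)_{kj})`
    (G : ℝ → (Fin n → ℝ) → Fin n → ℝ)
    (hG : ∀ t x i, G t x i =
      4 * α ^ 2 * (∑ k, pd (fun y => ∑ j, F t y k j * (D t y * D t y) i j) k x)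
        - 2 * α ^ 2 * (∑ k, ∑ j, F t x k j * pd (fun y => (D t y * D t y) k j) i x)) :
    ∀ t, HasDerivAt
      (fun τ => ∫ s in (0:ℝ)..1,
        ∑ i, v τ (η τ (γ s)) i * deriv (fun r => η τ (γ r)) s i)
      (∫ s in (0:ℝ)..1,
        ∑ i, G t (η t (γ s)) i * deriv (fun r => η t (γ r)) s i) t := by
  intro t
  -- ## Basic differentiability facts
  have hud : Differentiable ℝ (fun q : ℝ × (Fin n → ℝ) => u q.1 q.2) :=
    hu.differentiable (by norm_num)
  have hηd : Differentiable ℝ (fun q : ℝ × (Fin n → ℝ) => η q.1 q.2) :=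
    hη.differentiable two_ne_zero
  have hγd : ∀ s, HasDerivAt γ (deriv γ s) s := fun s =>
    ((hγ.differentiable one_ne_zero) s).hasDerivAt
  have hum : ∀ k, ContDiff ℝ 3 (fun q : ℝ × (Fin n → ℝ) => u q.1 q.2 k) := fun k =>
    contDiff_pi.mp hu k
  have hpdu : ∀ (j k : Fin n),
      ContDiff ℝ 2 (fun q : ℝ × (Fin n → ℝ) => pd (fun z => u q.1 z k) j q.2) := fun j k =>
    contDiff_pd (hum k) (by norm_num) j
  have hC2 : ∀ (m j k l : Fin n),
      ContDiff ℝ 2 (fun q : ℝ × (Fin n → ℝ) => C q.1 q.2 m j k l) := by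
    intro m j k l
    have he : (fun q : ℝ × (Fin n → ℝ) => C q.1 q.2 m j k l) = fun q =>
        (1 / 4 : ℝ) * (F q.1 q.2 l j * (if m = k then 1 else 0)
          + F q.1 q.2 k j * (if m = l then 1 else 0)
          + F q.1 q.2 l m * (if j = k then 1 else 0)
          + F q.1 q.2 k m * (if j = l then 1 else 0)) :=
      funext fun q => hC q.1 q.2 m j k l
    rw [he]
    exact (contDiff_const.mul (((((hF l j).mul contDiff_const).add
      ((hF k j).mul contDiff_const)).add ((hF l m).mul contDiff_const)).add
      ((hF k m).mul contDiff_const))).of_le (by norm_num)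
  have hg2 : ∀ (m l : Fin n), ContDiff ℝ 2 (fun q : ℝ × (Fin n → ℝ) =>
      ∑ j, ∑ k, C q.1 q.2 m j k l * pd (fun z => u q.1 z k) j q.2) := fun m l =>
    ContDiff.sum fun j _ => ContDiff.sum fun k _ => (hC2 m j k l).mul (hpdu j k)
  have hCu1 : ∀ m, ContDiff ℝ 1 (fun q : ℝ × (Fin n → ℝ) => Cu q.1 q.2 m) := by
    intro m
    have he : (fun q : ℝ × (Fin n → ℝ) => Cu q.1 q.2 m) = fun q =>
        ∑ l, pd (fun y => ∑ j, ∑ k, C q.1 y m j k l * pd (fun z => u q.1 z k) j y) l q.2 :=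
      funext fun q => hCu q.1 q.2 m
    rw [he]
    exact ContDiff.sum fun l _ => contDiff_pd (hg2 m l) (by norm_num) l
  have hv1 : ∀ i, ContDiff ℝ 1 (fun q : ℝ × (Fin n → ℝ) => v q.1 q.2 i) := by
    intro i
    have he : (fun q : ℝ × (Fin n → ℝ) => v q.1 q.2 i)
        = fun q => u q.1 q.2 i - α ^ 2 * Cu q.1 q.2 i := funext fun q => hv q.1 q.2 i
    rw [he]
    exact ((hum i).of_le (by norm_num)).sub (contDiff_const.mul (hCu1 i))
  have hvd : ∀ i, Differentiable ℝ (fun q : ℝ × (Fin n → ℝ) => v q.1 q.2 i) := fun i =>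
    (hv1 i).differentiable one_ne_zero
  -- ## the transported loop velocity
  set Dg : ℝ → ℝ → (Fin n → ℝ) := fun τ s =>
    fderiv ℝ (fun q : ℝ × (Fin n → ℝ) => η q.1 q.2) (τ, γ s) ((0:ℝ), deriv γ s) with hDgdef
  have hA : ∀ τ s, HasDerivAt (fun r => η τ (γ r)) (Dg τ s) s := by
    intro τ s
    exact (hasFDerivAt_partial_snd (f := fun q : ℝ × (Fin n → ℝ) => η q.1 q.2)
      (t := τ) (x := γ s) (hηd _)).comp_hasDerivAt s (hγd s)
  set φ : ℝ → ℝ → ℝ := fun τ s => ∑ i, v τ (η τ (γ s)) i * Dg τ s i with hφdef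
  set φ' : ℝ → ℝ → ℝ := fun τ s => ∑ i,
    (fderiv ℝ (fun q : ℝ × (Fin n → ℝ) => v q.1 q.2 i) (τ, η τ (γ s))
        (1, u τ (η τ (γ s))) * Dg τ s i
      + v τ (η τ (γ s)) i * fderiv ℝ (fun q : ℝ × (Fin n → ℝ) => u q.1 q.2)
          (τ, η τ (γ s)) ((0:ℝ), Dg τ s) i) with hφ'def
  -- ## differentiating the integrand in τ
  have hB : ∀ s τ, HasDerivAt (fun τ' => φ τ' s) (φ' τ s) τ := by
    intro s τ
    apply HasDerivAt.fun_sum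
    intro i _
    have b1 : HasDerivAt (fun τ' => v τ' (η τ' (γ s)) i)
        (fderiv ℝ (fun q : ℝ × (Fin n → ℝ) => v q.1 q.2 i) (τ, η τ (γ s))
          (1, u τ (η τ (γ s)))) τ :=
      hasDerivAt_comp_curve (hvd i _) (hηflow τ (γ s))
    have b2 : HasDerivAt (fun τ' => Dg τ' s)
        (fderiv ℝ (fun q : ℝ × (Fin n → ℝ) => u q.1 q.2) (τ, η τ (γ s))
          ((0:ℝ), Dg τ s)) τ := by
      have hm := mixed_partial hη τ (γ s) (deriv γ s)
      have key1 : (fun τ' => fderiv ℝ (fun y => η τ' y) (γ s) (deriv γ s))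
          = fun τ' => Dg τ' s := by
        funext τ'
        exact fderiv_partial_snd_apply (hηd (τ', γ s)) (deriv γ s)
      have key2 : (fun y => fderiv ℝ (fun q : ℝ × (Fin n → ℝ) => η q.1 q.2) (τ, y)
          ((1:ℝ), 0)) = fun y => u τ (η τ y) := by
        funext y
        exact HasDerivAt.unique (deriv_partial_fst (hηd (τ, y))) (hηflow τ y)
      rw [key1, key2] at hm
      have h1 := hasFDerivAt_partial_snd (f := fun q : ℝ × (Fin n → ℝ) => η q.1 q.2)
        (t := τ) (x := γ s) (hηd _)
      have h2 := hasFDerivAt_partial_snd (f := fun q : ℝ × (Fin n → ℝ) => u q.1 q.2)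
        (t := τ) (x := η τ (γ s)) (hud _)
      have h3 : HasFDerivAt (fun y => u τ (η τ y))
          (((fderiv ℝ (fun q : ℝ × (Fin n → ℝ) => u q.1 q.2) (τ, η τ (γ s))).comp
              (ContinuousLinearMap.inr ℝ ℝ (Fin n → ℝ))).comp
            ((fderiv ℝ (fun q : ℝ × (Fin n → ℝ) => η q.1 q.2) (τ, γ s)).comp
              (ContinuousLinearMap.inr ℝ ℝ (Fin n → ℝ)))) (γ s) := h2.comp (γ s) h1
      have key3 : fderiv ℝ (fun y => u τ (η τ y)) (γ s) (deriv γ s)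
          = fderiv ℝ (fun q : ℝ × (Fin n → ℝ) => u q.1 q.2) (τ, η τ (γ s))
              ((0:ℝ), Dg τ s) := by
        rw [h3.fderiv]; rfl
      rw [key3] at hm
      exact hm
    have b2i : HasDerivAt (fun τ' => Dg τ' s i)
        (fderiv ℝ (fun q : ℝ × (Fin n → ℝ) => u q.1 q.2) (τ, η τ (γ s))
          ((0:ℝ), Dg τ s) i) τ :=
      (ContinuousLinearMap.proj (R := ℝ) (φ := fun _ : Fin n => ℝ)
        i).hasFDerivAt.comp_hasDerivAt τ b2
    exact b1.mul b2i
  -- ## joint continuity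
  have hxc : Continuous (fun q : ℝ × ℝ => ((q.1, η q.1 (γ q.2)) : ℝ × (Fin n → ℝ))) :=
    continuous_fst.prodMk (hη.continuous.comp
      (continuous_fst.prodMk (hγ.continuous.comp continuous_snd)))
  have hDgc : Continuous (fun q : ℝ × ℝ => Dg q.1 q.2) := by
    apply Continuous.clm_apply
    · exact (hη.continuous_fderiv two_ne_zero).comp
        (continuous_fst.prodMk (hγ.continuous.comp continuous_snd))
    · exact continuous_const.prodMk ((hγ.continuous_deriv le_rfl).comp continuous_snd)
  have hφc : Continuous (fun q : ℝ × ℝ => φ q.1 q.2) := by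
    apply continuous_finset_sum
    intro i _
    exact (((hv1 i).continuous).comp hxc).mul ((continuous_apply i).comp hDgc)
  have hφ'c : Continuous (fun q : ℝ × ℝ => φ' q.1 q.2) := by
    apply continuous_finset_sum
    intro i _
    apply Continuous.add
    · apply Continuous.mul
      · exact (((hv1 i).continuous_fderiv one_ne_zero).comp hxc).clm_apply
          (continuous_const.prodMk (hu.continuous.comp hxc))
      · exact (continuous_apply i).comp hDgc
    · apply Continuous.mul
      · exact ((hv1 i).continuous).comp hxc
      · exact (continuous_apply i).comp
          (((hu.continuous_fderiv (by norm_num)).comp hxc).clm_apply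
            (continuous_const.prodMk hDgc))
  -- ## a uniform bound near t
  obtain ⟨M, hM⟩ := (((isCompact_Icc (a := t - 1) (b := t + 1))).prod
    (isCompact_Icc (a := (0:ℝ)) (b := 1))).exists_bound_of_continuousOn hφ'c.continuousOn
  -- ## differentiation under the integral sign
  have main := intervalIntegral.hasDerivAt_integral_of_dominated_loc_of_deriv_le
    (F := fun τ s => φ τ s) (F' := fun τ s => φ' τ s) (bound := fun _ => M)
    (μ := MeasureTheory.volume) (a := (0:ℝ)) (b := 1) (x₀ := t) (s := Metric.ball t 1) (Metric.ball_mem_nhds t one_pos)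
    (Filter.Eventually.of_forall fun τ =>
      ((hφc.comp ((continuous_const (y := τ)).prodMk continuous_id)).aestronglyMeasurable).restrict)
    ((hφc.comp ((continuous_const (y := t)).prodMk continuous_id)).intervalIntegrable 0 1)
    ((hφ'c.comp ((continuous_const (y := t)).prodMk continuous_id)).aestronglyMeasurable).restrict
    (Filter.Eventually.of_forall fun s hs τ hτ => by
      have hsmem : s ∈ Set.Icc (0:ℝ) 1 := by
        rw [Set.uIoc_of_le zero_le_one] at hs
        exact ⟨le_of_lt hs.1, hs.2⟩
      have hτmem : τ ∈ Set.Icc (t - 1) (t + 1) := by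
        rw [Real.ball_eq_Ioo] at hτ
        exact ⟨le_of_lt hτ.1, le_of_lt hτ.2⟩
      exact hM (τ, s) (Set.mk_mem_prod hτmem hsmem))
    (intervalIntegrable_const)
    (Filter.Eventually.of_forall fun s _ τ _ => hB s τ)
  -- ## the Bernoulli-type exact part
  set Q : (Fin n → ℝ) → ℝ := fun y => (1/2 : ℝ) * ∑ m, u t y m * u t y m - p t y with hQdef
  have hudx : ∀ (x : Fin n → ℝ) (m : Fin n), HasFDerivAt (fun y => u t y m)
      ((fderiv ℝ (fun q : ℝ × (Fin n → ℝ) => u q.1 q.2 m) (t, x)).comp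
        (ContinuousLinearMap.inr ℝ ℝ (Fin n → ℝ))) x := fun x m =>
    hasFDerivAt_partial_snd (((hum m).differentiable (by norm_num)) (t, x))
  have hpdx : ∀ (x : Fin n → ℝ), HasFDerivAt (fun y => p t y)
      ((fderiv ℝ (fun q : ℝ × (Fin n → ℝ) => p q.1 q.2) (t, x)).comp
        (ContinuousLinearMap.inr ℝ ℝ (Fin n → ℝ))) x := fun x =>
    hasFDerivAt_partial_snd ((hp.differentiable (by norm_num)) (t, x))
  set LQ : (Fin n → ℝ) → ((Fin n → ℝ) →L[ℝ] ℝ) := fun x =>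
    (∑ m, u t x m • fderiv ℝ (fun y => u t y m) x) - fderiv ℝ (fun y => p t y) x with hLQdef
  have hQ : ∀ x, HasFDerivAt Q (LQ x) x := by
    intro x
    have h1 : ∀ m : Fin n, HasFDerivAt (fun y => u t y m * u t y m)
        (u t x m • fderiv ℝ (fun y => u t y m) x
          + u t x m • fderiv ℝ (fun y => u t y m) x) x := fun m =>
      ((hudx x m).differentiableAt.hasFDerivAt).mul (hudx x m).differentiableAt.hasFDerivAt
    have h2 := HasFDerivAt.sum (fun m (_ : m ∈ Finset.univ) => h1 m)
    have h3 := h2.const_mul (1/2 : ℝ)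
    have h5 := h3.sub (hpdx x).differentiableAt.hasFDerivAt
    have hsum : (∑ m, (u t x m • fderiv ℝ (fun y => u t y m) x
          + u t x m • fderiv ℝ (fun y => u t y m) x))
        = (2:ℝ) • ∑ m, u t x m • fderiv ℝ (fun y => u t y m) x := by
      rw [two_smul]; exact Finset.sum_add_distrib
    rw [hsum, smul_smul] at h5
    norm_num at h5
    exact h5
  set qd : ℝ → ℝ := fun s => LQ (η t (γ s)) (Dg t s) with hqddef
  have hQder : ∀ s, HasDerivAt (fun r => Q (η t (γ r))) (qd s) s := fun s =>
    (hQ _).comp_hasDerivAt s (hA t s)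
  have hDgtc : Continuous (fun s => Dg t s) :=
    hDgc.comp ((continuous_const (y := t)).prodMk continuous_id)
  have hxtc : Continuous (fun s => ((t, η t (γ s)) : ℝ × (Fin n → ℝ))) :=
    hxc.comp ((continuous_const (y := t)).prodMk continuous_id)
  have hetc : Continuous (fun s => η t (γ s)) := continuous_snd.comp hxtc
  have hqdc : Continuous qd := by
    have he : qd = fun s => (∑ m, u t (η t (γ s)) m *
        fderiv ℝ (fun q : ℝ × (Fin n → ℝ) => u q.1 q.2 m) (t, η t (γ s)) ((0:ℝ), Dg t s))
        - fderiv ℝ (fun q : ℝ × (Fin n → ℝ) => p q.1 q.2) (t, η t (γ s)) ((0:ℝ), Dg t s) := by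
      funext s
      show LQ (η t (γ s)) (Dg t s) = _
      rw [hLQdef]
      simp only [ContinuousLinearMap.sub_apply, ContinuousLinearMap.coe_sum',
        Finset.sum_apply, ContinuousLinearMap.smul_apply, smul_eq_mul]
      congr 1
      · refine Finset.sum_congr rfl fun m _ => ?_
        rw [(hudx (η t (γ s)) m).fderiv]
        rfl
      · rw [(hpdx (η t (γ s))).fderiv]
        rfl
    rw [he]
    apply Continuous.sub
    · apply continuous_finset_sum
      intro m _
      exact ((contDiff_pi.mp hu m).continuous.comp hxtc).mul
        ((((hum m).continuous_fderiv (by norm_num)).comp hxtc).clm_apply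
          (continuous_const.prodMk hDgtc))
    · exact ((hp.continuous_fderiv (by norm_num)).comp hxtc).clm_apply
        (continuous_const.prodMk hDgtc)
  have hγ10 : γ 1 = γ 0 := by have h := hloop 0; rwa [zero_add] at h
  have hint0 : (∫ s in (0:ℝ)..1, qd s) = 0 := by
    rw [intervalIntegral.integral_eq_sub_of_hasDerivAt (fun s _ => hQder s)
      (hqdc.intervalIntegrable 0 1), hγ10, sub_self]
  -- ## the pointwise identity
  have hpoint : ∀ s : ℝ, φ' t s - qd s = ∑ i, G t (η t (γ s)) i * Dg t s i := by
    intro s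
    set x : Fin n → ℝ := η t (γ s) with hx
    set d : Fin n → ℝ := Dg t s with hd
    have hAe : ∀ i, fderiv ℝ (fun q : ℝ × (Fin n → ℝ) => v q.1 q.2 i) (t, x) (1, u t x)
        = -pd (fun y => p t y) i x
          + α ^ 2 * (∑ m, pd (fun y => u t y m) i x * Cu t x m) + G t x i := by
      intro i
      have h1' : fderiv ℝ (fun q : ℝ × (Fin n → ℝ) => v q.1 q.2 i) (t, x) (1, u t x)
          = deriv (fun s' => v s' x i) t + ∑ m, u t x m * pd (fun y => v t y i) m x :=
        fderiv_one_w (hvd i (t, x)) (u t x)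
      rw [h1']
      have h2 := heqn t x i
      have h3 := hG t x i
      linarith
    have hBe : ∀ i, fderiv ℝ (fun q : ℝ × (Fin n → ℝ) => u q.1 q.2) (t, x) ((0:ℝ), d) i
        = ∑ m, d m * pd (fun y => u t y i) m x := by
      intro i
      have hproj : HasFDerivAt (fun q : ℝ × (Fin n → ℝ) => u q.1 q.2 i)
          ((ContinuousLinearMap.proj (R := ℝ) (φ := fun _ : Fin n => ℝ) i).comp
            (fderiv ℝ (fun q : ℝ × (Fin n → ℝ) => u q.1 q.2) (t, x))) (t, x) :=
        (ContinuousLinearMap.proj (R := ℝ) (φ := fun _ : Fin n => ℝ)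
          i).hasFDerivAt.comp (t, x) (hud (t, x)).hasFDerivAt
      have h1 : fderiv ℝ (fun q : ℝ × (Fin n → ℝ) => u q.1 q.2) (t, x) ((0:ℝ), d) i
          = fderiv ℝ (fun q : ℝ × (Fin n → ℝ) => u q.1 q.2 i) (t, x) ((0:ℝ), d) := by
        rw [hproj.fderiv]; rfl
      have h2 : fderiv ℝ (fun q : ℝ × (Fin n → ℝ) => u q.1 q.2 i) (t, x) ((0:ℝ), d)
          = fderiv ℝ (fun y => u t y i) x d :=
        (fderiv_partial_snd_apply (((hum i).differentiable (by norm_num)) (t, x)) d).symm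
      rw [h1, h2, clm_apply_eq_sum (fderiv ℝ (fun y => u t y i) x) d]
      exact Finset.sum_congr rfl fun m _ => by rw [smul_eq_mul]; rfl
    have hqde : qd s = (∑ m, u t x m * (∑ i, d i * pd (fun y => u t y m) i x))
        - ∑ i, d i * pd (fun y => p t y) i x := by
      show ((∑ m, u t x m • fderiv ℝ (fun y => u t y m) x)
        - fderiv ℝ (fun y => p t y) x) d = _
      simp only [ContinuousLinearMap.sub_apply, ContinuousLinearMap.coe_sum',
        Finset.sum_apply, ContinuousLinearMap.smul_apply, smul_eq_mul]
      congr 1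
      · refine Finset.sum_congr rfl fun m _ => ?_
        congr 1
        rw [clm_apply_eq_sum (fderiv ℝ (fun y => u t y m) x) d]
        exact Finset.sum_congr rfl fun i _ => by rw [smul_eq_mul]; rfl
      · rw [clm_apply_eq_sum (fderiv ℝ (fun y => p t y) x) d]
        exact Finset.sum_congr rfl fun i _ => by rw [smul_eq_mul]; rfl
    have hST : ∑ i, (∑ m, pd (fun y => u t y m) i x * Cu t x m) * d i
        = ∑ i, Cu t x i * (∑ m, d m * pd (fun y => u t y i) m x) := by
      simp only [Finset.sum_mul, Finset.mul_sum]
      rw [Finset.sum_comm]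
      exact Finset.sum_congr rfl fun i _ => Finset.sum_congr rfl fun m _ => by ring
    have hfirst : φ' t s = ∑ i, ((-pd (fun y => p t y) i x
        + α ^ 2 * (∑ m, pd (fun y => u t y m) i x * Cu t x m) + G t x i) * d i
        + (u t x i - α ^ 2 * Cu t x i) * (∑ m, d m * pd (fun y => u t y i) m x)) := by
      show (∑ i, (fderiv ℝ (fun q : ℝ × (Fin n → ℝ) => v q.1 q.2 i) (t, x) (1, u t x) * d i
        + v t x i * fderiv ℝ (fun q : ℝ × (Fin n → ℝ) => u q.1 q.2) (t, x) ((0:ℝ), d) i)) = _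
      exact Finset.sum_congr rfl fun i _ => by rw [hAe i, hBe i, hv t x i]
    rw [hfirst, hqde]
    exact circulation_algebra (fun i => pd (fun y => p t y) i x)
      (fun i => ∑ m, pd (fun y => u t y m) i x * Cu t x m) (fun i => G t x i)
      (fun i => u t x i) (fun i => Cu t x i)
      (fun i => ∑ m, d m * pd (fun y => u t y i) m x) d α hST
  -- ## assembling the result
  have hval : (∫ s in (0:ℝ)..1, ∑ i, G t (η t (γ s)) i * deriv (fun r => η t (γ r)) s i)
      = ∫ s in (0:ℝ)..1, φ' t s := by
    have he : ∀ s : ℝ, (∑ i, G t (η t (γ s)) i * deriv (fun r => η t (γ r)) s i)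
        = φ' t s - qd s := by
      intro s
      rw [hpoint s]
      exact Finset.sum_congr rfl fun i _ => by rw [(hA t s).deriv]
    rw [intervalIntegral.integral_congr (g := fun s => φ' t s - qd s) (fun s _ => he s),
      intervalIntegral.integral_sub main.1 (hqdc.intervalIntegrable 0 1), hint0, sub_zero]
  have hfun : (fun τ => ∫ s in (0:ℝ)..1,
      ∑ i, v τ (η τ (γ s)) i * deriv (fun r => η τ (γ r)) s i)
      = fun τ => ∫ s in (0:ℝ)..1, φ τ s := by
    funext τ
    apply intervalIntegral.integral_congr
    intro s _
    exact Finset.sum_congr rfl fun i _ => by rw [(hA τ s).deriv]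
  rw [hfun, hval]
  exact main.2
end
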